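/- arXiv:math/9902124 — 12 statements merged into one kernel-verified Lean document; each statement's English description precedes it below -/
import Mathlib

section
/- Let R be a commutative ring with total ring of fractions F(R). Suppose X is a matrix over F(R) admitting two right-fraction representations X = A₁ b₁⁻¹ = A₂ B₂⁻¹ where A₁, A₂ are matrices over R, b₁ ∈ R is a nonzerodivisor, and B₂ is a square matrix over R whose determinant is a nonzerodivisor. Then the R-module generated by the rows of the stacked matrix [A₁ᵗ, (b₁E)ᵗ]ᵗ is isomorphic to the R-module generated by the rows of [A₂ᵗ, B₂ᵗ]ᵗ. -/
/-!
From `X = A₁ b₁⁻¹ = A₂ B₂⁻¹` one gets `[A₁; b₁E] · C = [A₂; B₂]` over `F(R)` with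
`C = b₁⁻¹ B₂`, which is invertible because `det B₂` is a nonzerodivisor. Right multiplication
by `C` is an automorphism of `F(R)ᵐ` carrying the generating rows of one module to those of the
other, and `R ↪ F(R)` lets it restrict to the row modules.
-/

open Matrix

open Function Set Submodule in
theorem Submodule.nonempty_span_range_linearEquiv_of_map
    {R M N P Q ι : Type*} [Semiring R] [AddCommMonoid M] [Module R M] [AddCommMonoid N]
    [Module R N] [AddCommMonoid P] [Module R P] [AddCommMonoid Q] [Module R Q]
    (φ : M →ₗ[R] P) (ψ : N →ₗ[R] Q) (hφ : Injective φ) (hψ : Injective ψ) (e : P ≃ₗ[R] Q)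
    (v : ι → M) (w : ι → N) (h : ∀ i, e (φ (v i)) = ψ (w i)) :
    Nonempty (span R (range v) ≃ₗ[R] span R (range w)) := by
  have hmap : ((span R (range v)).map φ).map (e : P →ₗ[R] Q) = (span R (range w)).map ψ := by
    simp only [map_span, ← range_comp]
    exact congrArg (span R ∘ range) (funext h)
  exact ⟨(equivMapOfInjective φ hφ _).trans <| (e.submoduleMap _).trans <|
    (LinearEquiv.ofEq _ _ hmap).trans (equivMapOfInjective ψ hψ _).symm⟩

open Function Set Submodule in
theorem Matrix.nonempty_span_range_linearEquiv_of_map_mul_eq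
    {R K ι m : Type*} [CommSemiring R] [CommRing K] [Algebra R K] [Fintype m] [DecidableEq m]
    (hinj : Injective (algebraMap R K)) (M N : Matrix ι m R) (C : Matrix m m K)
    (hC : IsUnit C.det) (h : M.map (algebraMap R K) * C = N.map (algebraMap R K)) :
    Nonempty (span R (range M) ≃ₗ[R] span R (range N)) := by
  let φ := (Algebra.linearMap R K).compLeft m
  let e := (Cᵀ.toLinearEquiv' (Cᵀ.invertibleOfIsUnitDet (by rwa [det_transpose])))
    |>.restrictScalars R
  refine nonempty_span_range_linearEquiv_of_map φ φ hinj.comp_left hinj.comp_left e M N fun i ↦ ?_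
  change Cᵀ *ᵥ (M.map (algebraMap R K) i) = N.map (algebraMap R K) i
  rw [mulVec_transpose, ← mul_apply_eq_vecMul, h]

theorem Matrix.fromRows_smul_one_mul_inv_smul {K n m : Type*} [CommRing K] [Fintype m]
    [DecidableEq m] {X A₁ A₂ : Matrix n m K} {B : Matrix m m K} (u : Kˣ)
    (h₁ : X * ((u : K) • (1 : Matrix m m K)) = A₁) (h₂ : X * B = A₂) :
    fromRows A₁ ((u : K) • (1 : Matrix m m K)) * ((↑u⁻¹ : K) • B) = fromRows A₂ B := by
  have hB : (u : K) • (1 : Matrix m m K) * ((↑u⁻¹ : K) • B) = B := by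
    rw [smul_mul_smul_comm, Units.mul_inv, one_smul, Matrix.one_mul]
  rw [fromRows_mul, ← h₁, Matrix.mul_assoc, hB, h₂]

/-- two right-fraction representations of a matrix over the total ring of
fractions give isomorphic row-span modules. -/
theorem stmt_0 {R : Type*} [CommRing R] {n m : ℕ}
    (X : Matrix (Fin n) (Fin m) (FractionRing R))
    (A₁ A₂ : Matrix (Fin n) (Fin m) R) (b₁ : R) (B₂ : Matrix (Fin m) (Fin m) R)
    (hb₁ : b₁ ∈ nonZeroDivisors R) (hB₂ : B₂.det ∈ nonZeroDivisors R)
    (h1 : X * ((algebraMap R (FractionRing R) b₁) •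
        (1 : Matrix (Fin m) (Fin m) (FractionRing R)))
      = A₁.map (algebraMap R (FractionRing R)))
    (h2 : X * B₂.map (algebraMap R (FractionRing R))
      = A₂.map (algebraMap R (FractionRing R))) :
    Nonempty
      ((Submodule.span R
          (Set.range fun i => Matrix.fromRows A₁ (b₁ • (1 : Matrix (Fin m) (Fin m) R)) i)) ≃ₗ[R]
        (Submodule.span R (Set.range fun i => Matrix.fromRows A₂ B₂ i))) := by
  set f := algebraMap R (FractionRing R)
  let u := (IsLocalization.map_units (FractionRing R) ⟨b₁, hb₁⟩).unit
  have hdet : IsUnit (B₂.map f).det := by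
    rw [← RingHom.mapMatrix_apply, ← RingHom.map_det]
    exact IsLocalization.map_units _ ⟨B₂.det, hB₂⟩
  refine nonempty_span_range_linearEquiv_of_map_mul_eq (IsFractionRing.injective R _) _ _
    ((↑u⁻¹ : FractionRing R) • B₂.map f) ?_ ?_
  · rw [det_smul]
    exact ((u⁻¹).isUnit.pow _).mul hdet
  · rw [fromRows_map, fromRows_map]
    convert fromRows_smul_one_mul_inv_smul u h1 h2 using 3
    rw [smul_one_eq_diagonal, smul_one_eq_diagonal, diagonal_map (map_zero _)]
    rfl
end

section
/- Let A be a commutative ring with total ring of fractions F, and let P be an n×m matrix over F. Fix a set I of m distinct integers between 1 and m+n, and let Δ_I be the m×(m+n) matrix with 1 in position (k, i_k) (where i_1 < ⋯ < i_m are the elements of I) and 0 elsewhere. For any factorization P = N D⁻¹ with N ∈ A^{n×m}, D ∈ A^{m×m}, det D a nonzerodivisor, define Λ(N,D) = { λ ∈ A : there exists K ∈ A^{(m+n)×m} with λ T = K Δ_I T, where T = [Nᵗ, Dᵗ]ᵗ }. Then Λ(N,D) is independent of the choice of the factorization: if P = N D⁻¹ = N' D'⁻¹ with both D, D' nonsingular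 over A, then Λ(N,D) = Λ(N',D'). -/
open Matrix

/-- The selection matrix `Δ_I`: for `I` a set of `m` indices in `Fin N` with elements
`i_1 < ⋯ < i_m`, the `(k, i_k)` entry is `1` and all other entries are `0`. -/
noncomputable def deltaMat {A : Type*} [CommRing A] (m N : ℕ) (I : Finset (Fin N))
    (h : I.card = m) : Matrix (Fin m) (Fin N) A :=
  Matrix.of fun k j => if j = (I.orderIsoOfFin h k : Fin N) then 1 else 0

/-- The stacked matrix `T = [Nᵗ, Dᵗ]ᵗ`. -/
def stackND {A : Type*} [CommRing A] {n m : ℕ} (N : Matrix (Fin n) (Fin m) A)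
    (D : Matrix (Fin m) (Fin m) A) : Matrix (Fin (n + m)) (Fin m) A :=
  Matrix.of (Fin.addCases (motive := fun _ => Fin m → A) (fun i => N i) (fun j => D j))

/-- The generalized elementary factor of the factorization `P = N D⁻¹` with respect to `I`. -/
noncomputable def gef {A : Type*} [CommRing A] {n m : ℕ} (N : Matrix (Fin n) (Fin m) A)
    (D : Matrix (Fin m) (Fin m) A) (I : Finset (Fin (n + m))) (h : I.card = m) : Set A :=
  {lam | ∃ K : Matrix (Fin (n + m)) (Fin m) A,
    lam • stackND N D = K * (deltaMat (A := A) m (n + m) I h * stackND N D)}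

/-!
Over `F`, the stacked matrix of `P = N D⁻¹` is `T = [P; 1] D`, so `T' = T (D⁻¹ D')`. The relation
`λ T = K Δ_I T` survives right multiplication by any matrix over `F`, and an identity between
matrices over `A` holding over `F` already holds over `A`, since `A → F` is injective. Hence
`Λ(N, D) ⊆ Λ(N', D')`, and equality follows by symmetry.
-/

open Function

section Transfer

variable {A B : Type*} [CommRing A] [CommRing B]

lemma stackND_mul {n m : ℕ} (N : Matrix (Fin n) (Fin m) A) (D X : Matrix (Fin m) (Fin m) A) :
    stackND N D * X = stackND (N * X) (D * X) := by
  ext i j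
  refine Fin.addCases (fun i => ?_) (fun i => ?_) i <;> simp [stackND, Matrix.mul_apply]

lemma stackND_map {n m : ℕ} (f : A →+* B) (N : Matrix (Fin n) (Fin m) A)
    (D : Matrix (Fin m) (Fin m) A) :
    (stackND N D).map f = stackND (N.map f) (D.map f) := by
  ext i j
  refine Fin.addCases (fun i => ?_) (fun i => ?_) i <;> simp [stackND]

lemma stackND_map_eq_stackND_one_mul {n m : ℕ} (f : A →+* B) {P : Matrix (Fin n) (Fin m) B}
    {N : Matrix (Fin n) (Fin m) A} {D : Matrix (Fin m) (Fin m) A} (hP : P * D.map f = N.map f) :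
    (stackND N D).map f = stackND P 1 * D.map f := by
  rw [stackND_map, stackND_mul, hP, Matrix.one_mul]

lemma smul_eq_mul_mul_of_map_mul_eq {ι κ μ : Type*} [Fintype ι] [Fintype κ] [Fintype μ]
    {f : A →+* B} (hf : Injective f) {T T' : Matrix ι μ A} {X : Matrix μ μ B}
    (hT : T.map f * X = T'.map f) {lam : A} {K : Matrix ι κ A} {Δ : Matrix κ ι A}
    (h : lam • T = K * (Δ * T)) : lam • T' = K * (Δ * T') := by
  refine Matrix.map_injective hf ?_
  calc (lam • T').map f
      = f lam • (T.map f * X) := by rw [hT, Matrix.map_smulₛₗ f f lam (map_mul f lam)]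
    _ = (lam • T).map f * X := by rw [Matrix.map_smulₛₗ f f lam (map_mul f lam), Matrix.smul_mul]
    _ = K.map f * (Δ.map f * (T.map f * X)) := by
        rw [h, Matrix.map_mul, Matrix.map_mul, Matrix.mul_assoc, Matrix.mul_assoc]
    _ = (K * (Δ * T')).map f := by rw [hT, Matrix.map_mul, Matrix.map_mul]

lemma gef_subset_of_map {n m : ℕ} {f : A →+* B} (hf : Injective f) {P : Matrix (Fin n) (Fin m) B}
    {N N' : Matrix (Fin n) (Fin m) A} {D D' : Matrix (Fin m) (Fin m) A}
    (hD : IsUnit (D.map f).det) (hP : P * D.map f = N.map f) (hP' : P * D'.map f = N'.map f)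
    (I : Finset (Fin (n + m))) (hI : I.card = m) :
    gef N D I hI ⊆ gef N' D' I hI := by
  rintro lam ⟨K, hK⟩
  refine ⟨K, smul_eq_mul_mul_of_map_mul_eq hf (X := (D.map f)⁻¹ * D'.map f) ?_ hK⟩
  rw [stackND_map_eq_stackND_one_mul f hP, stackND_map_eq_stackND_one_mul f hP',
    Matrix.mul_assoc, ← Matrix.mul_assoc (D.map f), Matrix.mul_nonsing_inv _ hD, Matrix.one_mul]

end Transfer

lemma isUnit_det_map_algebraMap {A : Type*} [CommRing A] {m : ℕ} {D : Matrix (Fin m) (Fin m) A}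
    (hD : D.det ∈ nonZeroDivisors A) : IsUnit (D.map (algebraMap A (FractionRing A))).det := by
  rw [← RingHom.mapMatrix_apply, ← RingHom.map_det]
  exact IsLocalization.map_units (FractionRing A) ⟨D.det, hD⟩

/-- the generalized elementary factor is independent of the choice of
right fraction `P = N D⁻¹`. -/
theorem stmt_1 {A : Type*} [CommRing A] {n m : ℕ}
    (P : Matrix (Fin n) (Fin m) (FractionRing A))
    (N N' : Matrix (Fin n) (Fin m) A) (D D' : Matrix (Fin m) (Fin m) A)
    (hD : D.det ∈ nonZeroDivisors A) (hD' : D'.det ∈ nonZeroDivisors A)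
    (hP : P * D.map (algebraMap A (FractionRing A)) = N.map (algebraMap A (FractionRing A)))
    (hP' : P * D'.map (algebraMap A (FractionRing A)) = N'.map (algebraMap A (FractionRing A)))
    (I : Finset (Fin (n + m))) (hI : I.card = m) :
    gef N D I hI = gef N' D' I hI := by
  have hf := IsFractionRing.injective A (FractionRing A)
  exact (gef_subset_of_map hf (isUnit_det_map_algebraMap hD) hP hP' I hI).antisymm
    (gef_subset_of_map hf (isUnit_det_map_algebraMap hD') hP' hP I hI)
end

section
/- Let R be a commutative ring with total ring of fractions F(R). Let P ∈ F(R)^{n×m} and C ∈ F(R)^{m×n} be matrices such that det(E_n + PC) is a unit of F(R). Define H(P,C) = [[(E_n+PC)⁻¹, −P(E_m+CP)⁻¹], [C(E_n+PC)⁻¹, (E_m+CP)⁻¹]] ∈ F(R)^{(m+n)×(m+n)}. Then the R-modules T_{P,R} ⊕ T_{C,R} and T_{H(P,C),R} are isomorphic. -/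
open Matrix

/-- The feedback matrix `H(P,C)`. -/
noncomputable def Hmat {F : Type*} [CommRing F] {n m : ℕ}
    (P : Matrix (Fin n) (Fin m) F) (C : Matrix (Fin m) (Fin n) F) :
    Matrix (Fin n ⊕ Fin m) (Fin n ⊕ Fin m) F :=
  Matrix.fromBlocks (1 + P * C)⁻¹ (-(P * (1 + C * P)⁻¹))
    (C * (1 + P * C)⁻¹) (1 + C * P)⁻¹

/-!
For `X = A B⁻¹`, right multiplication by `B⁻¹` is an injective `R`-linear map on `F(R)`-row
vectors sending the rows of `[A; B]` to the rows of `[X; 1]`; so `T_{X,R}` is the `R`-span of the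
rows of `[X; 1]`, i.e. `Rᵐ + R·(rows of X)` inside `F(R)ᵐ`, whatever the factorization.
Now `H(P,C)` is the inverse of `K = [[1, P], [-C, 1]]`, and right multiplication by `K` carries
the rows of `[H; 1]` to those of `[1; K]`. Subtracting unit vectors from the rows of `K` splits
their span as `(Rⁿ + R·(rows of C)) × (Rᵐ + R·(rows of P))`.
-/

open Set Submodule

theorem Matrix.mul_one_add_mul_inv_comm {ι κ F : Type*} [Fintype ι] [Fintype κ]
    [DecidableEq ι] [DecidableEq κ] [CommRing F] (P : Matrix ι κ F) (C : Matrix κ ι F)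
    (hPC : IsUnit (1 + P * C).det) : P * (1 + C * P)⁻¹ = (1 + P * C)⁻¹ * P := by
  have hCP : IsUnit (1 + C * P).det := by rwa [← det_one_add_mul_comm]
  have h : (1 + P * C) * P = P * (1 + C * P) := by
    simp only [Matrix.add_mul, Matrix.mul_add, Matrix.one_mul, Matrix.mul_one, Matrix.mul_assoc]
  calc P * (1 + C * P)⁻¹ = (1 + P * C)⁻¹ * ((1 + P * C) * P) * (1 + C * P)⁻¹ := by
        rw [← Matrix.mul_assoc, nonsing_inv_mul _ hPC, Matrix.one_mul]
    _ = (1 + P * C)⁻¹ * P := by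
        rw [h, Matrix.mul_assoc, Matrix.mul_assoc, mul_nonsing_inv _ hCP, Matrix.mul_one]

theorem Hmat_mul_fromBlocks {F : Type*} [CommRing F] {n m : ℕ}
    (P : Matrix (Fin n) (Fin m) F) (C : Matrix (Fin m) (Fin n) F)
    (hPC : IsUnit (1 + P * C).det) :
    Hmat P C * fromBlocks 1 P (-C) 1 = 1 := by
  have hCP : IsUnit (1 + C * P).det := by rwa [← det_one_add_mul_comm]
  rw [Hmat, fromBlocks_multiply, ← fromBlocks_one]
  simp only [Matrix.mul_one, Matrix.neg_mul, Matrix.mul_neg, neg_neg,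
    mul_one_add_mul_inv_comm P C hPC, mul_one_add_mul_inv_comm C P hCP]
  congr 1
  · simpa [Matrix.mul_add, Matrix.mul_assoc] using nonsing_inv_mul _ hPC
  · exact add_neg_cancel _
  · exact add_neg_cancel _
  · rw [add_comm]
    simpa [Matrix.mul_add, Matrix.mul_assoc] using nonsing_inv_mul _ hCP

noncomputable section

def Submodule.prodEquiv {R M N : Type*} [Semiring R] [AddCommMonoid M] [Module R M]
    [AddCommMonoid N] [Module R N] (p : Submodule R M) (q : Submodule R N) :
    p.prod q ≃ₗ[R] p × q where
  toFun x := (⟨x.1.1, x.2.1⟩, ⟨x.1.2, x.2.2⟩)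
  map_add' _ _ := rfl
  map_smul' _ _ := rfl
  invFun x := ⟨(x.1.1, x.2.1), ⟨x.1.2, x.2.2⟩⟩
  left_inv _ := rfl
  right_inv _ := rfl

def Submodule.spanRangeEquivOfInjective {R ι M N : Type*} [Semiring R] [AddCommMonoid M]
    [Module R M] [AddCommMonoid N] [Module R N] (f : M →ₗ[R] N) (hf : Function.Injective f)
    (v : ι → M) : span R (range v) ≃ₗ[R] span R (range (f ∘ v)) :=
  (equivMapOfInjective f hf _).trans (LinearEquiv.ofEq _ _ (by rw [map_span, range_comp]))

namespace Matrix

variable {R ι κ F : Type*} [CommRing R]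

section RowSpan

variable [CommRing F] [Algebra R F] [Fintype κ] [DecidableEq κ]

def rowSpanEquivOfMulEq {X Y : Matrix ι κ F} {M : Matrix κ κ F} (hM : IsUnit M)
    (h : X * M = Y) : span R (range X) ≃ₗ[R] span R (range Y) :=
  (spanRangeEquivOfInjective (M.vecMulLinear.restrictScalars R)
    (vecMul_injective_of_isUnit hM) X).trans (LinearEquiv.ofEq _ _ (by rw [← h]; rfl))

def rowSpanEquivMap (A : Matrix ι κ R) (hF : Function.Injective (algebraMap R F)) :
    span R (range A) ≃ₗ[R] span R (range (A.map (algebraMap R F))) :=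
  spanRangeEquivOfInjective ((Algebra.linearMap R F).compLeft κ) hF.comp_left A

def fromRowsSpanEquiv [IsFractionRing R F] {A : Matrix ι κ R} {B : Matrix κ κ R}
    (hB : B.det ∈ nonZeroDivisors R) {X : Matrix ι κ F}
    (hX : X * B.map (algebraMap R F) = A.map (algebraMap R F)) :
    span R (range (fromRows A B)) ≃ₗ[R] span R (range (fromRows X (1 : Matrix κ κ F))) :=
  have hB' : IsUnit (B.map (algebraMap R F)).det := by
    rw [← RingHom.mapMatrix_apply, ← RingHom.map_det]
    exact IsLocalization.map_units F (⟨B.det, hB⟩ : nonZeroDivisors R)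
  (rowSpanEquivMap _ (IsFractionRing.injective R F)).trans <|
    rowSpanEquivOfMulEq ((isUnit_iff_isUnit_det _).2 (isUnit_nonsing_inv_det _ hB')) <| by
      rw [fromRows_map, fromRows_mul, ← hX, Matrix.mul_assoc, mul_nonsing_inv _ hB',
        Matrix.mul_one]

end RowSpan

section Feedback

variable [Ring F] [Module R F] [DecidableEq ι] [DecidableEq κ]

theorem map_span_rows_fromBlocks (P : Matrix ι κ F) (C : Matrix κ ι F) :
    (span R (range (fromRows (1 : Matrix (ι ⊕ κ) (ι ⊕ κ) F) (fromBlocks 1 P (-C) 1)))).map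
      (LinearEquiv.sumArrowLequivProdArrow ι κ R F).toLinearMap =
    (span R (range (fromRows C (1 : Matrix ι ι F)))).prod
      (span R (range (fromRows P (1 : Matrix κ κ F)))) := by
  -- in block form, the components of each row are definitionally rows of `1`, `P`, `C` or `0`
  rw [← fromBlocks_one]
  set rows :=
    fromRows (fromBlocks 1 0 0 1 : Matrix (ι ⊕ κ) (ι ⊕ κ) F) (fromBlocks 1 P (-C) 1)
  have mem : ∀ k, rows k ∈ span R (range rows) := fun k => subset_span ⟨k, rfl⟩
  have memC : ∀ k, fromRows C (1 : Matrix ι ι F) k ∈ span R (range (fromRows C 1)) :=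
    fun k => subset_span ⟨k, rfl⟩
  have memP : ∀ k, fromRows P (1 : Matrix κ κ F) k ∈ span R (range (fromRows P 1)) :=
    fun k => subset_span ⟨k, rfl⟩
  apply le_antisymm
  · rw [map_span, span_le]
    rintro _ ⟨_, ⟨(i | j) | (i | j), rfl⟩, rfl⟩
    · exact ⟨memC (.inr i), zero_mem _⟩
    · exact ⟨zero_mem _, memP (.inr j)⟩
    · exact ⟨memC (.inr i), memP (.inl i)⟩
    · exact ⟨neg_mem (memC (.inl j)), memP (.inr j)⟩
  · rw [← LinearMap.span_inl_union_inr, span_le, union_subset_iff]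
    constructor
    · rintro _ ⟨_, ⟨(j | i), rfl⟩, rfl⟩
      · exact ⟨_, sub_mem (mem (.inl (.inr j))) (mem (.inr (.inr j))), by
          ext a <;> simp [rows, one_apply]⟩
      · exact ⟨_, mem (.inl (.inl i)), by ext a <;> simp [rows, one_apply]⟩
    · rintro _ ⟨_, ⟨(i | j), rfl⟩, rfl⟩
      · exact ⟨_, sub_mem (mem (.inr (.inl i))) (mem (.inl (.inl i))), by
          ext a <;> simp [rows, one_apply]⟩
      · exact ⟨_, mem (.inl (.inr j)), by ext a <;> simp [rows, one_apply]⟩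

def spanRowsFromBlocksEquiv (P : Matrix ι κ F) (C : Matrix κ ι F) :
    span R (range (fromRows (1 : Matrix (ι ⊕ κ) (ι ⊕ κ) F) (fromBlocks 1 P (-C) 1)))
      ≃ₗ[R] span R (range (fromRows C (1 : Matrix ι ι F))) ×
        span R (range (fromRows P (1 : Matrix κ κ F))) :=
  ((LinearEquiv.sumArrowLequivProdArrow ι κ R F).submoduleMap _).trans <|
    (LinearEquiv.ofEq _ _ (map_span_rows_fromBlocks P C)).trans (prodEquiv _ _)

end Feedback

end Matrix

end

/-- `T_{P,R} ⊕ T_{C,R} ≅ T_{H(P,C),R}`. -/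
theorem stmt_4 {R : Type*} [CommRing R] {n m : ℕ}
    (P : Matrix (Fin n) (Fin m) (FractionRing R))
    (C : Matrix (Fin m) (Fin n) (FractionRing R))
    (hu : IsUnit (1 + P * C).det)
    -- a right fraction P = N_P D_P⁻¹ over R
    (NP : Matrix (Fin n) (Fin m) R) (DP : Matrix (Fin m) (Fin m) R)
    (hDP : DP.det ∈ nonZeroDivisors R)
    (hP : P * DP.map (algebraMap R (FractionRing R)) = NP.map (algebraMap R (FractionRing R)))
    -- a right fraction C = N_C D_C⁻¹ over R
    (NC : Matrix (Fin m) (Fin n) R) (DC : Matrix (Fin n) (Fin n) R)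
    (hDC : DC.det ∈ nonZeroDivisors R)
    (hC : C * DC.map (algebraMap R (FractionRing R)) = NC.map (algebraMap R (FractionRing R)))
    -- a right fraction H(P,C) = N_H D_H⁻¹ over R
    (NH DH : Matrix (Fin n ⊕ Fin m) (Fin n ⊕ Fin m) R)
    (hDH : DH.det ∈ nonZeroDivisors R)
    (hH : Hmat P C * DH.map (algebraMap R (FractionRing R))
      = NH.map (algebraMap R (FractionRing R))) :
    Nonempty
      (((Submodule.span R (Set.range fun i => Matrix.fromRows NP DP i)) ×
        (Submodule.span R (Set.range fun i => Matrix.fromRows NC DC i))) ≃ₗ[R]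
       (Submodule.span R (Set.range fun i => Matrix.fromRows NH DH i))) := by
  have hHK := Hmat_mul_fromBlocks P C hu
  have hK : IsUnit (fromBlocks 1 P (-C) 1) :=
    (isUnit_iff_isUnit_det _).2 (isUnit_det_of_left_inverse hHK)
  have EK : span R (range (fromRows (Hmat P C) 1)) ≃ₗ[R]
      span R (range (fromRows 1 (fromBlocks 1 P (-C) 1))) :=
    rowSpanEquivOfMulEq hK (by rw [fromRows_mul, hHK, Matrix.one_mul])
  exact ⟨((fromRowsSpanEquiv hDP hP).prodCongr (fromRowsSpanEquiv hDC hC)).trans <|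
    (LinearEquiv.prodComm R _ _).trans <| (spanRowsFromBlocksEquiv P C).symm.trans <|
      EK.symm.trans (fromRowsSpanEquiv hDH hH).symm⟩
end

section
/- Let R be a commutative ring with total ring of fractions F(R), and P ∈ F(R)^{n×m}, C ∈ F(R)^{m×n} with det(E_n + PC) a unit of F(R). Then H(Pᵗ, Cᵗ)ᵗ = S₁ · H(P,C) · S₂, where S₁ = [[O, E_m],[E_n, O]] and S₂ = [[O, E_n],[E_m, O]] are the indicated block permutation matrices, and H is the feedback matrix H(P,C) = [[(E_n+PC)⁻¹, −P(E_m+CP)⁻¹], [C(E_n+PC)⁻¹, (E_m+CP)⁻¹]]. -/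
open Matrix

lemma aux_comm {F : Type*} [CommRing F] {n m : ℕ}
    (P : Matrix (Fin n) (Fin m) F) (C : Matrix (Fin m) (Fin n) F)
    (hu : IsUnit (1 + P * C).det) :
    (1 + P * C)⁻¹ * P = P * (1 + C * P)⁻¹ := by
  have hu' : IsUnit (1 + C * P).det := by
    rwa [Matrix.det_one_add_mul_comm]
  have key : P * (1 + C * P) = (1 + P * C) * P := by
    simp [Matrix.mul_add, Matrix.add_mul, Matrix.mul_assoc]
  calc (1 + P * C)⁻¹ * P
      = (1 + P * C)⁻¹ * (P * (1 + C * P) * (1 + C * P)⁻¹) := by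
        rw [Matrix.mul_assoc, Matrix.mul_nonsing_inv _ hu', Matrix.mul_one]
    _ = (1 + P * C)⁻¹ * ((1 + P * C) * (P * (1 + C * P)⁻¹)) := by
        rw [key, Matrix.mul_assoc]
    _ = P * (1 + C * P)⁻¹ := by
        rw [← Matrix.mul_assoc, Matrix.nonsing_inv_mul _ hu, Matrix.one_mul]

/-- `H(Pᵗ,Cᵗ)ᵗ = S₁ · H(P,C) · S₂` for the indicated block permutation
matrices. -/
theorem stmt_5 {R : Type*} [CommRing R] {n m : ℕ}
    (P : Matrix (Fin n) (Fin m) (FractionRing R))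
    (C : Matrix (Fin m) (Fin n) (FractionRing R))
    (hu : IsUnit (1 + P * C).det) :
    (Hmat Pᵀ Cᵀ)ᵀ =
      (Matrix.fromBlocks 0 1 1 0 :
          Matrix (Fin m ⊕ Fin n) (Fin n ⊕ Fin m) (FractionRing R)) *
        Hmat P C *
      (Matrix.fromBlocks 0 1 1 0 :
          Matrix (Fin n ⊕ Fin m) (Fin m ⊕ Fin n) (FractionRing R)) := by
  have hu' : IsUnit (1 + C * P).det := by rwa [Matrix.det_one_add_mul_comm]
  have h1 : (1 + Pᵀ * Cᵀ)⁻¹ᵀ = (1 + C * P)⁻¹ := by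
    rw [Matrix.transpose_nonsing_inv]
    congr 1
    simp [Matrix.transpose_add, Matrix.transpose_mul]
  have h2 : (1 + Cᵀ * Pᵀ)⁻¹ᵀ = (1 + P * C)⁻¹ := by
    rw [Matrix.transpose_nonsing_inv]
    congr 1
    simp [Matrix.transpose_add, Matrix.transpose_mul]
  unfold Hmat
  rw [Matrix.fromBlocks_transpose, Matrix.fromBlocks_multiply, Matrix.fromBlocks_multiply]
  simp only [Matrix.zero_mul, Matrix.mul_zero, Matrix.one_mul, Matrix.mul_one,
    zero_add, add_zero, Matrix.transpose_neg, Matrix.transpose_mul, h1, h2,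
    Matrix.transpose_transpose, aux_comm C P hu', aux_comm P C hu]
end

section
/- Let R be a commutative ring with total ring of fractions F(R), and P ∈ F(R)^{n×m}, C ∈ F(R)^{m×n} with det(E_n + PC) a unit of F(R). Then H(C,P) = U · H(P,C) · V where U = [[O, −E_n],[E_m, O]] and V = [[O, E_m],[−E_n, O]], and consequently the R-modules T_{H(P,C),R} and T_{H(C,P),R} are isomorphic. -/
open Matrix

/-!
Over `F(R)`, the rows of `[N; D]` span a copy of the rows of `[X; 1] · D`, so `T_{X,R}` is the
`R`-span of the rows of `[X; 1]` up to the invertible right factor `D`. Since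
`H(C,P) = U H(P,C) V` with `U V = 1`, we get `[H(C,P); 1] = diag(U, U) [H(P,C); 1] V`;
the signed permutation `diag(U, U)` has integer entries, so it does not change the `R`-span of
the rows, and `V` is invertible.
-/

theorem Hmat_swap {F : Type*} [CommRing F] {n m : ℕ}
    (P : Matrix (Fin n) (Fin m) F) (C : Matrix (Fin m) (Fin n) F) :
    Hmat C P =
      (fromBlocks 0 (-1) 1 0 : Matrix (Fin m ⊕ Fin n) (Fin n ⊕ Fin m) F) * Hmat P C *
        (fromBlocks 0 1 (-1) 0 : Matrix (Fin n ⊕ Fin m) (Fin m ⊕ Fin n) F) := by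
  simp [Hmat, fromBlocks_multiply]

section RowSpan

variable (R : Type*) {F : Type*} [CommRing R] [CommRing F] [Algebra R F]

abbrev rowSpan {k l : Type*} (A : Matrix k l F) : Submodule R (l → F) :=
  Submodule.span R (Set.range fun i => A i)

variable {R}

theorem rowSpan_fromRows {k₁ k₂ l : Type*} (A : Matrix k₁ l F) (B : Matrix k₂ l F) :
    rowSpan R (fromRows A B) = rowSpan R A ⊔ rowSpan R B := by
  rw [← Submodule.span_union, ← Set.Sum.elim_range]
  rfl

theorem rowSpan_map_mul_le {k k' l : Type*} [Fintype k] (G : Matrix k' k R) (A : Matrix k l F) :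
    rowSpan R (G.map (algebraMap R F) * A) ≤ rowSpan R A := by
  rw [Submodule.span_le]
  rintro _ ⟨i, rfl⟩
  beta_reduce
  have hrow : (G.map (algebraMap R F) * A) i = ∑ j, G i j • A j := by
    ext c
    simp [mul_apply, Algebra.smul_def]
  rw [hrow]
  exact Submodule.sum_mem _ fun j _ => Submodule.smul_mem _ _ (Submodule.subset_span ⟨j, rfl⟩)

theorem rowSpan_map_mul_eq {k k' l : Type*} [Fintype k] [Fintype k'] [DecidableEq k]
    (G : Matrix k' k R) (G' : Matrix k k' R) (hG : G' * G = 1) (A : Matrix k l F) :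
    rowSpan R (G.map (algebraMap R F) * A) = rowSpan R A := by
  refine le_antisymm (rowSpan_map_mul_le G A) ?_
  have hA : A = G'.map (algebraMap R F) * (G.map (algebraMap R F) * A) := by
    rw [← Matrix.mul_assoc, ← Matrix.map_mul, hG, Matrix.map_one _ (map_zero _) (map_one _),
      Matrix.one_mul]
  conv_lhs => rw [hA]
  exact rowSpan_map_mul_le G' _

noncomputable def vecMulEquiv {l l' : Type*} [Fintype l] [Fintype l'] [DecidableEq l]
    [DecidableEq l'] (D : Matrix l l' F) (D' : Matrix l' l F) (h : D * D' = 1) (h' : D' * D = 1) :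
    (l → F) ≃ₗ[R] (l' → F) :=
  (LinearEquiv.ofLinearMap D.vecMulLinear D'.vecMulLinear
    (LinearMap.ext fun v => by simp [vecMul_vecMul, h'])
    (LinearMap.ext fun v => by simp [vecMul_vecMul, h])).restrictScalars R

theorem rowSpan_mul_equiv {k l l' : Type*} [Fintype l] [Fintype l'] [DecidableEq l]
    [DecidableEq l'] (A : Matrix k l F) (D : Matrix l l' F) (D' : Matrix l' l F)
    (h : D * D' = 1) (h' : D' * D = 1) :
    Nonempty (rowSpan R A ≃ₗ[R] rowSpan R (A * D)) := by
  let e : (l → F) ≃ₗ[R] (l' → F) := vecMulEquiv D D' h h'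
  have hmap : (rowSpan R A).map (e : (l → F) →ₗ[R] (l' → F)) = rowSpan R (A * D) := by
    rw [Submodule.map_span, ← Set.range_comp]
    congr 1
  exact ⟨(e.submoduleMap _).trans (LinearEquiv.ofEq _ _ hmap)⟩

/-- For `X = N D⁻¹`, `rowSpan R (fromRows N D)` is the paper's `T_{X,R}`; up to isomorphism it
depends only on `X`. -/
theorem rowSpan_fromRows_equiv_of_mul_eq [IsFractionRing R F] {k : Type*} [Fintype k]
    [DecidableEq k] (X : Matrix k k F) (N D : Matrix k k R) (hD : D.det ∈ nonZeroDivisors R)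
    (hX : X * D.map (algebraMap R F) = N.map (algebraMap R F)) :
    Nonempty (rowSpan R (fromRows N D) ≃ₗ[R] rowSpan R (fromRows X (1 : Matrix k k F))) := by
  set f := algebraMap R F
  have hDunit : IsUnit (D.map f).det := by
    rw [← RingHom.mapMatrix_apply, ← RingHom.map_det]
    exact IsLocalization.map_units (M := nonZeroDivisors R) F ⟨D.det, hD⟩
  let ι : (k → R) →ₗ[R] (k → F) := (Algebra.linearMap R F).compLeft k
  have hι : Function.Injective ι := fun u v huv =>
    funext fun j => IsFractionRing.injective R F (congrFun huv j)
  have hmap : (rowSpan R (fromRows N D)).map ι =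
      rowSpan R (fromRows X (1 : Matrix k k F) * D.map f) := by
    rw [Submodule.map_span, ← Set.range_comp, fromRows_mul, Matrix.one_mul, hX]
    congr 2
    funext i
    cases i <;> rfl
  obtain ⟨eD⟩ := rowSpan_mul_equiv (R := R) (fromRows X (1 : Matrix k k F)) (D.map f)
    (D.map f)⁻¹ (mul_nonsing_inv _ hDunit) (nonsing_inv_mul _ hDunit)
  exact ⟨((Submodule.equivMapOfInjective ι hι _).trans (LinearEquiv.ofEq _ _ hmap)).trans
    eD.symm⟩

theorem rowSpan_fromRows_one_conj_equiv {k k' : Type*} [Fintype k] [Fintype k'] [DecidableEq k]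
    [DecidableEq k'] (X : Matrix k k F) (U : Matrix k' k R) (V : Matrix k k' R)
    (hUV : U * V = 1) (hVU : V * U = 1) :
    Nonempty (rowSpan R (fromRows X (1 : Matrix k k F)) ≃ₗ[R]
      rowSpan R (fromRows (U.map (algebraMap R F) * X * V.map (algebraMap R F))
        (1 : Matrix k' k' F))) := by
  set f := algebraMap R F
  have hUVf : U.map f * V.map f = 1 := by
    rw [← Matrix.map_mul, hUV, Matrix.map_one _ (map_zero _) (map_one _)]
  have hVUf : V.map f * U.map f = 1 := by
    rw [← Matrix.map_mul, hVU, Matrix.map_one _ (map_zero _) (map_one _)]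
  have hspan : rowSpan R (fromRows (U.map f * X * V.map f) (1 : Matrix k' k' F)) =
      rowSpan R (fromRows X (1 : Matrix k k F) * V.map f) := by
    rw [← hUVf, Matrix.mul_assoc, rowSpan_fromRows, rowSpan_map_mul_eq U V hVU,
      rowSpan_map_mul_eq U V hVU, fromRows_mul, Matrix.one_mul, rowSpan_fromRows]
  obtain ⟨eV⟩ :=
    rowSpan_mul_equiv (R := R) (fromRows X (1 : Matrix k k F)) (V.map f) (U.map f) hVUf hUVf
  exact ⟨eV.trans (LinearEquiv.ofEq _ _ hspan.symm)⟩

theorem rowSpan_fromRows_Hmat_swap_equiv {n m : ℕ}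
    (P : Matrix (Fin n) (Fin m) F) (C : Matrix (Fin m) (Fin n) F) :
    Nonempty (rowSpan R (fromRows (Hmat P C) (1 : Matrix (Fin n ⊕ Fin m) _ F)) ≃ₗ[R]
      rowSpan R (fromRows (Hmat C P) (1 : Matrix (Fin m ⊕ Fin n) _ F))) := by
  let U : Matrix (Fin m ⊕ Fin n) (Fin n ⊕ Fin m) R := fromBlocks 0 (-1) 1 0
  let V : Matrix (Fin n ⊕ Fin m) (Fin m ⊕ Fin n) R := fromBlocks 0 1 (-1) 0
  have hU : U.map (algebraMap R F) = fromBlocks 0 (-1) 1 0 := by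
    simp [U, fromBlocks_map, Matrix.map_neg, Matrix.map_one]
  have hV : V.map (algebraMap R F) = fromBlocks 0 1 (-1) 0 := by
    simp [V, fromBlocks_map, Matrix.map_neg, Matrix.map_one]
  have hconj := rowSpan_fromRows_one_conj_equiv (F := F) (Hmat P C) U V
    (by simp [U, V, fromBlocks_multiply, ← fromBlocks_one])
    (by simp [U, V, fromBlocks_multiply, ← fromBlocks_one])
  rwa [hU, hV, ← Hmat_swap] at hconj

end RowSpan

theorem stmt_6_general {R : Type*} [CommRing R] {n m : ℕ}
    (P : Matrix (Fin n) (Fin m) (FractionRing R))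
    (C : Matrix (Fin m) (Fin n) (FractionRing R)) :
    (Hmat C P =
      (Matrix.fromBlocks 0 (-1) 1 0 :
          Matrix (Fin m ⊕ Fin n) (Fin n ⊕ Fin m) (FractionRing R)) *
        Hmat P C *
      (Matrix.fromBlocks 0 1 (-1) 0 :
          Matrix (Fin n ⊕ Fin m) (Fin m ⊕ Fin n) (FractionRing R))) ∧
    (∀ (NH DH : Matrix (Fin n ⊕ Fin m) (Fin n ⊕ Fin m) R)
       (NH' DH' : Matrix (Fin m ⊕ Fin n) (Fin m ⊕ Fin n) R),
      DH.det ∈ nonZeroDivisors R → DH'.det ∈ nonZeroDivisors R →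
      Hmat P C * DH.map (algebraMap R (FractionRing R))
        = NH.map (algebraMap R (FractionRing R)) →
      Hmat C P * DH'.map (algebraMap R (FractionRing R))
        = NH'.map (algebraMap R (FractionRing R)) →
      Nonempty
        ((Submodule.span R (Set.range fun i => Matrix.fromRows NH DH i)) ≃ₗ[R]
         (Submodule.span R (Set.range fun i => Matrix.fromRows NH' DH' i)))) := by
  refine ⟨Hmat_swap P C, fun NH DH NH' DH' hDH hDH' hH hH' => ?_⟩
  obtain ⟨e⟩ := rowSpan_fromRows_equiv_of_mul_eq _ NH DH hDH hH
  obtain ⟨e'⟩ := rowSpan_fromRows_equiv_of_mul_eq _ NH' DH' hDH' hH'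
  obtain ⟨eSwap⟩ := rowSpan_fromRows_Hmat_swap_equiv (R := R) P C
  exact ⟨(e.trans eSwap).trans e'.symm⟩

/-- `H(C,P) = U · H(P,C) · V`, and consequently
`T_{H(P,C),R} ≅ T_{H(C,P),R}`. -/
theorem stmt_6 {R : Type*} [CommRing R] {n m : ℕ}
    (P : Matrix (Fin n) (Fin m) (FractionRing R))
    (C : Matrix (Fin m) (Fin n) (FractionRing R))
    (hu : IsUnit (1 + P * C).det) :
    (Hmat C P =
      (Matrix.fromBlocks 0 (-1) 1 0 :
          Matrix (Fin m ⊕ Fin n) (Fin n ⊕ Fin m) (FractionRing R)) *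
        Hmat P C *
      (Matrix.fromBlocks 0 1 (-1) 0 :
          Matrix (Fin n ⊕ Fin m) (Fin m ⊕ Fin n) (FractionRing R))) ∧
    (∀ (NH DH : Matrix (Fin n ⊕ Fin m) (Fin n ⊕ Fin m) R)
       (NH' DH' : Matrix (Fin m ⊕ Fin n) (Fin m ⊕ Fin n) R),
      DH.det ∈ nonZeroDivisors R → DH'.det ∈ nonZeroDivisors R →
      Hmat P C * DH.map (algebraMap R (FractionRing R))
        = NH.map (algebraMap R (FractionRing R)) →
      Hmat C P * DH'.map (algebraMap R (FractionRing R))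
        = NH'.map (algebraMap R (FractionRing R)) →
      Nonempty
        ((Submodule.span R (Set.range fun i => Matrix.fromRows NH DH i)) ≃ₗ[R]
         (Submodule.span R (Set.range fun i => Matrix.fromRows NH' DH' i)))) :=
  stmt_6_general P C
end

section
/- Let A be a commutative ring and Z ⊊ A a prime ideal of A. Suppose A, B, C₁, C₂ are matrices over A such that the block matrix [[A, C₁],[B, C₂]] is square with determinant in A∖Z, where A is a square matrix and A and B have the same number of columns. Then there exists a matrix R over A, with entries in {0,1}, such that det(A + RB) ∈ A∖Z. -/
/-!
Over the field `K = Frac(S ⧸ Z)` the hypothesis says that the rows of `A` and of `B` together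
span `Kᵃ`. Feed the rows of `B` in one at a time. When the row `v` comes in, either the rows of
`A` already span together with the remaining rows of `B`, or they are dependent modulo those,
so some row `Aᵢ` lies in the span of the other rows of `A` and the remaining rows of `B`; then
replacing `Aᵢ` by `Aᵢ + v` loses nothing and gains `v`. Each step contributes a 0-1 column to
`R`, and once all rows of `B` are used up the rows of `A + RB` alone span, so `A + RB` is
nonsingular over `K`, i.e. its determinant is not in `Z`.
-/

open Matrix Submodule

section Exchange

variable {K V ι : Type*} [AddCommGroup V]

theorem span_insert_le_span_update_add [Ring K] [Module K V] [DecidableEq ι] {A : ι → V}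
    {s : Set V} {i : ι} (hi : A i ∈ span K (A '' {i}ᶜ ∪ s)) (v : V) :
    span K (insert v (Set.range A ∪ s)) ≤
      span K (Set.range (Function.update A i (A i + v)) ∪ s) := by
  set A' := Function.update A i (A i + v)
  set T := span K (Set.range A' ∪ s)
  have hA'T : ∀ j, A' j ∈ T := fun j => subset_span (Or.inl (Set.mem_range_self j))
  have hsT : s ⊆ T := fun x hx => subset_span (Or.inr hx)
  have hAT : ∀ j ≠ i, A j ∈ T := fun j hj => by
    simpa [A', Function.update_of_ne hj] using hA'T j
  have hAiT : A i ∈ T :=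
    span_le.mpr (Set.union_subset (by rintro _ ⟨j, hj, rfl⟩; exact hAT j hj) hsT) hi
  have hvT : v ∈ T := by simpa [A'] using sub_mem (hA'T i) hAiT
  refine span_le.mpr (Set.insert_subset hvT (Set.union_subset ?_ hsT))
  rintro _ ⟨j, rfl⟩
  by_cases hj : j = i
  · exact hj ▸ hAiT
  · exact hAT j hj

variable [DivisionRing K] [Module K V] [FiniteDimensional K V] [Fintype ι]

theorem exists_mem_span_image_compl_union_of_span_ne_top {A : ι → V}
    (hcard : Fintype.card ι = Module.finrank K V) {s : Set V}
    (hs : span K (Set.range A ∪ s) ≠ ⊤) :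
    ∃ i, A i ∈ span K (A '' {i}ᶜ ∪ s) := by
  by_contra! hA
  have hli : LinearIndependent K A := linearIndependent_iff_notMem_span.mpr fun i hi =>
    hA i (span_mono (by simp [Set.compl_eq_univ_sdiff]) hi)
  exact hs (top_le_iff.mp ((hli.span_eq_top_of_card_eq_finrank' hcard).ge.trans
    (span_mono Set.subset_union_left)))

theorem exists_zero_one_span_add_smul_eq_top [DecidableEq ι] {A : ι → V}
    (hcard : Fintype.card ι = Module.finrank K V) {s : Set V} {v : V}
    (h : span K (insert v (Set.range A ∪ s)) = ⊤) :
    ∃ w : ι → K, (∀ i, w i = 0 ∨ w i = 1) ∧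
      span K (Set.range (fun i => A i + w i • v) ∪ s) = ⊤ := by
  by_cases hA : span K (Set.range A ∪ s) = ⊤
  · exact ⟨0, fun _ => .inl rfl, by simpa using hA⟩
  obtain ⟨i, hi⟩ := exists_mem_span_image_compl_union_of_span_ne_top hcard hA
  have hupdate :
      (fun j => A j + (Pi.single i 1 : ι → K) j • v) = Function.update A i (A i + v) := by
    ext j
    by_cases hj : j = i <;> simp [hj]
  refine ⟨Pi.single i 1, fun j => ?_, top_le_iff.mp ?_⟩
  · by_cases hj : j = i <;> simp [hj]
  · rw [hupdate, ← h]
    exact span_insert_le_span_update_add hi v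

end Exchange

namespace Matrix

theorem isUnit_det_iff_span_range_row_eq_top {R n : Type*} [CommRing R] [Fintype n]
    [DecidableEq n] (A : Matrix n n R) : IsUnit A.det ↔ span R (Set.range A.row) = ⊤ := by
  rw [← isUnit_iff_isUnit_det, ← vecMul_surjective_iff_isUnit, ← range_vecMulLinear,
    LinearMap.range_eq_top]
  rfl

theorem span_range_row_union_eq_top_of_isUnit_det_fromBlocks {R l m : Type*} [CommRing R]
    [Fintype l] [Fintype m] [DecidableEq l] [DecidableEq m]
    {A : Matrix l l R} {B : Matrix m l R} {C₁ : Matrix l m R} {C₂ : Matrix m m R}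
    (h : IsUnit (fromBlocks A C₁ B C₂).det) :
    span R (Set.range A.row ∪ Set.range B.row) = ⊤ := by
  let π := LinearMap.funLeft R R (Sum.inl : l → l ⊕ m)
  have hrows : π ∘ (fromBlocks A C₁ B C₂).row = Sum.elim A.row B.row := by
    ext (i | i) j <;> rfl
  rw [← Set.Sum.elim_range, ← hrows, Set.range_comp, span_image,
    (isUnit_det_iff_span_range_row_eq_top _).mp h, Submodule.map_top, LinearMap.range_eq_top]
  exact LinearMap.funLeft_surjective_of_injective _ _ _ Sum.inl_injective

theorem mul_eq_vecMulVec_add_mul_tail {α m o : Type*} [Semiring α] [Fintype m] {b : ℕ}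
    (R : Matrix m (Fin (b + 1)) α) (B : Matrix (Fin (b + 1)) o α) :
    R * B =
      vecMulVec (fun i => R i 0) (B.row 0) + R.submatrix id Fin.succ * of (Fin.tail B.row) := by
  ext i k
  simp [mul_apply, Fin.sum_univ_succ, vecMulVec_apply, Fin.tail]

theorem exists_zero_one_det_add_mul_ne_zero {K n : Type*} [Field K] [Fintype n]
    [DecidableEq n] {b : ℕ} (A : Matrix n n K) (B : Matrix (Fin b) n K)
    (h : span K (Set.range A.row ∪ Set.range B.row) = ⊤) :
    ∃ R : Matrix n (Fin b) K, (∀ i j, R i j = 0 ∨ R i j = 1) ∧ (A + R * B).det ≠ 0 := by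
  induction b generalizing A with
  | zero =>
    refine ⟨0, fun _ _ => .inl rfl, ?_⟩
    rw [Matrix.zero_mul, add_zero]
    exact ((isUnit_det_iff_span_range_row_eq_top A).mpr (by simpa using h)).ne_zero
  | succ b ih =>
    rw [Fin.range_fin_succ, Set.union_insert] at h
    obtain ⟨w, hw, hspan⟩ := exists_zero_one_span_add_smul_eq_top (by simp) h
    obtain ⟨R', hR', hdet⟩ := ih (A + vecMulVec w (B.row 0)) (of (Fin.tail B.row)) hspan
    refine ⟨of fun i => Fin.cons (w i) (R' i), fun i j => ?_, ?_⟩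
    · cases j using Fin.cases <;> simp [hw, hR']
    · have hR'eq : (of fun i => Fin.cons (w i) (R' i) : Matrix n (Fin (b + 1)) K).submatrix id
          Fin.succ = R' := by ext; simp
      rwa [mul_eq_vecMulVec_add_mul_tail, ← add_assoc, hR'eq]

end Matrix

/-- if the stacked block matrix `[[A, C₁],[B, C₂]]` is `Z`-nonsingular
(`Z` a prime ideal), then there is a 0-1 matrix `R` with `A + RB` `Z`-nonsingular. -/
theorem stmt_8 {S : Type*} [CommRing S] (Z : Ideal S) [Z.IsPrime] {a b : ℕ}
    (A : Matrix (Fin a) (Fin a) S) (B : Matrix (Fin b) (Fin a) S)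
    (C₁ : Matrix (Fin a) (Fin b) S) (C₂ : Matrix (Fin b) (Fin b) S)
    (h : (Matrix.fromBlocks A C₁ B C₂).det ∉ Z) :
    ∃ R : Matrix (Fin a) (Fin b) S,
      (∀ i j, R i j = 0 ∨ R i j = 1) ∧ (A + R * B).det ∉ Z := by
  let φ : S →+* FractionRing (S ⧸ Z) := (algebraMap (S ⧸ Z) _).comp (Ideal.Quotient.mk Z)
  have hφ : ∀ s, φ s = 0 ↔ s ∈ Z := fun s => by
    simp [φ, Ideal.Quotient.eq_zero_iff_mem]
  have hdetφ : ∀ {n : Type} [Fintype n] [DecidableEq n] (M : Matrix n n S),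
      (M.map φ).det = φ M.det :=
    fun M => (φ.map_det M).symm
  have hM : IsUnit (fromBlocks (A.map φ) (C₁.map φ) (B.map φ) (C₂.map φ)).det := by
    rwa [← fromBlocks_map, hdetφ, isUnit_iff_ne_zero, Ne, hφ]
  obtain ⟨RK, hRK, hdet⟩ := exists_zero_one_det_add_mul_ne_zero _ _
    (span_range_row_union_eq_top_of_isUnit_det_fromBlocks hM)
  have hlift : ∀ i j, ∃ r : S, (r = 0 ∨ r = 1) ∧ φ r = RK i j := fun i j => by
    rcases hRK i j with h0 | h1
    · exact ⟨0, .inl rfl, by simp [h0]⟩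
    · exact ⟨1, .inr rfl, by simp [h1]⟩
  choose R hR hφR using hlift
  refine ⟨of R, hR, fun hZ => hdet ?_⟩
  have hRK' : (of R).map φ = RK := ext hφR
  rwa [← hRK', ← Matrix.map_mul, ← Matrix.map_add _ (map_add φ), hdetφ, hφ]
end

section
/- Let A be a commutative ring, F its total ring of fractions, and P ∈ F^{n×m} a matrix with factorization P = N D⁻¹, N, D over A, det D a nonzerodivisor. Let I be an m-element subset of {1,…,m+n} and Λ_{PI} its generalized elementary factor. Suppose λ lies in the radical of Λ_{PI} and λ is not nilpotent. Then the A_λ-module T_{P,A_λ}, generated by the rows of T = [Nᵗ, Dᵗ]ᵗ over the localization A_λ = A[1/λ], is a free A_λ-module of rank m. -/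
/-!
Write `T = [Nᵗ, Dᵗ]ᵗ` and `S = Δ_I T` for its `m` rows indexed by `I`, and let
`λ ^ r • T = K * S`. Over `A_λ` the scalar `λ ^ r` is a unit, so every row of `T` lies in the
span of the rows of `S`. The bottom block of the relation reads `λ ^ r • D = K_bot * S`, so
`det S` divides `λ ^ (r m) * det D`, which stays a nonzerodivisor in `A_λ`; hence `det S` is a
nonzerodivisor, the rows of `S` are linearly independent, and they form a basis.
-/

open Matrix

open Submodule Set

namespace Matrix

variable {R : Type*} [CommRing R] {ι κ n : Type*} [Fintype κ]

lemma span_range_row_mul_le (K : Matrix ι κ R) (S : Matrix κ n R) :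
    span R (range (K * S).row) ≤ span R (range S.row) := by
  rw [← range_vecMulLinear S, span_le]
  rintro _ ⟨i, rfl⟩
  exact ⟨K i, rfl⟩

lemma span_range_row_submatrix_eq_of_isUnit_smul_eq_mul {T : Matrix ι n R} {e : κ → ι}
    {K : Matrix ι κ R} {c : R} (hc : IsUnit c) (h : c • T = K * T.submatrix e id) :
    span R (range (T.submatrix e id).row) = span R (range T.row) := by
  refine le_antisymm (span_mono ?_) ?_
  · rintro _ ⟨k, rfl⟩
    exact ⟨e k, rfl⟩
  · have hT : T = (((hc.unit⁻¹ : Rˣ) : R) • K) * T.submatrix e id := by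
      rw [smul_mul, ← h, smul_smul, IsUnit.val_inv_mul, one_smul]
    conv_lhs => rw [hT]
    exact span_range_row_mul_le _ _

theorem nonempty_basis_span_range_row [DecidableEq κ] {T : Matrix ι κ R} {e : κ → ι}
    {K : Matrix ι κ R} {c : R} (hc : IsUnit c) (h : c • T = K * T.submatrix e id)
    (hdet : (T.submatrix e id).det ∈ nonZeroDivisors R) :
    Nonempty (Module.Basis κ R (span R (range T.row))) :=
  have hli := (nonsingular_iff_det_mem_nonZeroDivisors.mpr hdet).linearIndependent_row
  ⟨(Module.Basis.span hli).map
    (LinearEquiv.ofEq _ _ (span_range_row_submatrix_eq_of_isUnit_smul_eq_mul hc h))⟩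

end Matrix

section GeneralizedElementaryFactor

variable {A : Type*} [CommRing A] {n m : ℕ}

lemma deltaMat_mul {N : ℕ} {α : Type*} (I : Finset (Fin N)) (h : I.card = m)
    (M : Matrix (Fin N) α A) :
    deltaMat (A := A) m N I h * M = M.submatrix (I.orderEmbOfFin h) id := by
  ext k j
  simp only [deltaMat, mul_apply, of_apply, ite_mul, one_mul, zero_mul, Finset.sum_ite_eq',
    Finset.mem_univ, if_true, submatrix_apply, id_eq]
  rfl

lemma stackND_submatrix_natAdd (N : Matrix (Fin n) (Fin m) A) (D : Matrix (Fin m) (Fin m) A) :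
    (stackND N D).submatrix (Fin.natAdd n) id = D := by
  ext i j
  simp [stackND]

variable {N : Matrix (Fin n) (Fin m) A} {D : Matrix (Fin m) (Fin m) A}
  {I : Finset (Fin (n + m))} {hI : I.card = m} {lam : A}

lemma exists_smul_stackND_eq_mul_submatrix_of_mem_gef (hlam : lam ∈ gef N D I hI) :
    ∃ K : Matrix (Fin (n + m)) (Fin m) A,
      lam • stackND N D = K * (stackND N D).submatrix (I.orderEmbOfFin hI) id := by
  obtain ⟨K, hK⟩ := hlam
  exact ⟨K, by rwa [deltaMat_mul] at hK⟩

lemma det_submatrix_stackND_dvd_of_mem_gef (hlam : lam ∈ gef N D I hI) :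
    ((stackND N D).submatrix (I.orderEmbOfFin hI) id).det ∣ lam ^ m * D.det := by
  obtain ⟨K, hK⟩ := exists_smul_stackND_eq_mul_submatrix_of_mem_gef hlam
  have hD : lam • D =
      K.submatrix (Fin.natAdd n) id * (stackND N D).submatrix (I.orderEmbOfFin hI) id :=
    calc lam • D = lam • (stackND N D).submatrix (Fin.natAdd n) id := by
          rw [stackND_submatrix_natAdd]
      _ = _ := congrArg (·.submatrix (Fin.natAdd n) id) hK
  have hdet := congrArg det hD
  rw [det_smul, det_mul, Fintype.card_fin] at hdet
  exact ⟨(K.submatrix (Fin.natAdd n) id).det, by rw [hdet, mul_comm]⟩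

lemma det_submatrix_map_stackND_mem_nonZeroDivisors_of_mem_gef {B : Type*} [CommRing B]
    (f : A →+* B) (hlam : lam ∈ gef N D I hI) (hunit : IsUnit (f lam))
    (hD : f D.det ∈ nonZeroDivisors B) :
    (((stackND N D).map f).submatrix (I.orderEmbOfFin hI) id).det ∈ nonZeroDivisors B := by
  obtain ⟨c, hc⟩ := det_submatrix_stackND_dvd_of_mem_gef hlam
  have hprod : f (lam ^ m * D.det) ∈ nonZeroDivisors B := by
    rw [map_mul, map_pow]
    exact mul_mem (hunit.pow m).mem_nonZeroDivisors hD
  rw [hc, map_mul, RingHom.map_det, RingHom.mapMatrix_apply, ← submatrix_map] at hprod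
  exact (mul_mem_nonZeroDivisors.mp hprod).1

end GeneralizedElementaryFactor

theorem stmt_10_general {A : Type*} [CommRing A] {n m : ℕ}
    (N : Matrix (Fin n) (Fin m) A) (D : Matrix (Fin m) (Fin m) A)
    (hD : D.det ∈ nonZeroDivisors A)
    (I : Finset (Fin (n + m))) (hI : I.card = m)
    (lam : A) (hrad : ∃ r : ℕ, lam ^ r ∈ gef N D I hI) :
    Nonempty (Module.Basis (Fin m) (Localization.Away lam)
      (Submodule.span (Localization.Away lam)
        (Set.range fun i =>
          (stackND N D).map (algebraMap A (Localization.Away lam)) i))) := by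
  obtain ⟨r, hr⟩ := hrad
  set f := algebraMap A (Localization.Away lam)
  obtain ⟨K, hK⟩ := exists_smul_stackND_eq_mul_submatrix_of_mem_gef hr
  have hunit : IsUnit (f (lam ^ r)) :=
    IsLocalization.map_units _ (⟨lam ^ r, r, rfl⟩ : Submonoid.powers lam)
  have hrel : f (lam ^ r) • (stackND N D).map f =
      K.map f * ((stackND N D).map f).submatrix (I.orderEmbOfFin hI) id := by
    rw [← Matrix.map_smulₛₗ _ _ _ (map_mul f _), hK, Matrix.map_mul, submatrix_map]
  have hdet := det_submatrix_map_stackND_mem_nonZeroDivisors_of_mem_gef f hr hunit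
    (IsLocalization.nonZeroDivisors_le_comap (Submonoid.powers lam) _ hD)
  exact nonempty_basis_span_range_row hunit hrel hdet

/-- if `λ` lies in the radical of the generalized elementary factor
`Λ_{PI}` and is not nilpotent, then the `A_λ`-module `T_{P,A_λ}` is free of rank `m`. -/
theorem stmt_10 {A : Type*} [CommRing A] {n m : ℕ}
    (P : Matrix (Fin n) (Fin m) (FractionRing A))
    (N : Matrix (Fin n) (Fin m) A) (D : Matrix (Fin m) (Fin m) A)
    (hD : D.det ∈ nonZeroDivisors A)
    (hP : P * D.map (algebraMap A (FractionRing A)) = N.map (algebraMap A (FractionRing A)))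
    (I : Finset (Fin (n + m))) (hI : I.card = m)
    (lam : A) (hrad : ∃ r : ℕ, lam ^ r ∈ gef N D I hI) (hnil : ¬ IsNilpotent lam) :
    Nonempty (Module.Basis (Fin m) (Localization.Away lam)
      (Submodule.span (Localization.Away lam)
        (Set.range fun i =>
          (stackND N D).map (algebraMap A (Localization.Away lam)) i))) :=
  stmt_10_general N D hD I hI lam hrad
end

section
/- Let A be a commutative ring, F its total ring of fractions, and let P ∈ F^{n×m} be a causal plant with respect to a prime ideal Z of A containing all zerodivisors. If P is stabilizable, then the A-modules T_P and W_P are both projective. -/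
open Matrix

/-- `C` stabilizes `P`: `det(E + PC)` is a unit of `F` and all entries of `H(P,C)`
come from `A`. -/
noncomputable def Stabilizes {A : Type*} [CommRing A] {n m : ℕ}
    (P : Matrix (Fin n) (Fin m) (FractionRing A))
    (C : Matrix (Fin m) (Fin n) (FractionRing A)) : Prop :=
  IsUnit (1 + P * C).det ∧
    ∀ i j, Hmat P C i j ∈ Set.range (algebraMap A (FractionRing A))

/-!
Let `Q = (1 + PC)⁻¹` and `R = (1 + CP)⁻¹`. The push-through identity `QP = PR` shows that
`L = [CQ, R]` is a left inverse of the graph `G = [P; 1]`, since `CQP + R = (1 + CP)R = 1`,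
while `GL` differs from the `A`-matrix `H(P,C)` only by constant blocks and signs.
For a right fraction `P = ND⁻¹` the matrix `M = [N; D]` equals `G·D` over `F`, so `Y = D⁻¹L`
satisfies `YM = 1` and `MY = GL` has entries in `A`. Hence `t ↦ tY` is an `A`-linear section of
the surjection `x ↦ xM` from a free module onto `T_P`, and `T_P` is projective.
`W_P` is the module `T` of the transposed plant `Pᵀ`, which `Cᵀ` stabilizes.
-/

theorem RingHom.comp_vecMul {R S ι κ : Type*} [NonAssocSemiring R] [NonAssocSemiring S]
    [Fintype ι] (f : R →+* S) (M : Matrix ι κ R) (v : ι → R) :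
    f ∘ (v ᵥ* M) = (f ∘ v) ᵥ* M.map f :=
  funext (f.map_vecMul M v)

namespace Matrix

section Graph

variable {R : Type*} [CommRing R] {ι κ : Type*} [Fintype ι] [Fintype κ] [DecidableEq ι]
  [DecidableEq κ]

theorem inv_one_add_mul_mul_eq_mul_inv (P : Matrix ι κ R) (C : Matrix κ ι R) :
    (1 + P * C)⁻¹ * P = P * (1 + C * P)⁻¹ := by
  by_cases hPC : IsUnit (1 + P * C).det
  · have hCP : IsUnit (1 + C * P).det := det_one_add_mul_comm P C ▸ hPC
    have hcomm : (1 + P * C) * P = P * (1 + C * P) := by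
      simp only [Matrix.add_mul, Matrix.mul_add, Matrix.one_mul, Matrix.mul_one, Matrix.mul_assoc]
    calc (1 + P * C)⁻¹ * P = (1 + P * C)⁻¹ * ((1 + P * C) * P) * (1 + C * P)⁻¹ := by
          rw [hcomm, Matrix.mul_assoc, Matrix.mul_assoc, mul_nonsing_inv _ hCP, Matrix.mul_one]
      _ = P * (1 + C * P)⁻¹ := by rw [← Matrix.mul_assoc, nonsing_inv_mul _ hPC, Matrix.one_mul]
  · have hCP : ¬IsUnit (1 + C * P).det := det_one_add_mul_comm P C ▸ hPC
    rw [nonsing_inv_apply_not_isUnit _ hPC, nonsing_inv_apply_not_isUnit _ hCP,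
      Matrix.zero_mul, Matrix.mul_zero]

theorem fromCols_mul_fromRows_one_eq_one {P : Matrix ι κ R} {C : Matrix κ ι R}
    (hCP : IsUnit (1 + C * P).det) :
    fromCols (C * (1 + P * C)⁻¹) (1 + C * P)⁻¹ * fromRows P (1 : Matrix κ κ R) = 1 := by
  rw [fromCols_mul_fromRows, Matrix.mul_one, Matrix.mul_assoc, inv_one_add_mul_mul_eq_mul_inv,
    ← Matrix.mul_assoc, ← add_one_mul, add_comm, mul_nonsing_inv _ hCP]

end Graph

theorem projective_span_rows_of_leftInverse {A K : Type*} [CommRing A] [CommRing K]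
    [Algebra A K] {ι κ : Type*} [Fintype ι] [Fintype κ] [DecidableEq κ]
    (hf : Function.Injective (algebraMap A K))
    (M : Matrix ι κ A) (Y : Matrix κ ι K) (W : Matrix ι ι A)
    (hYM : Y * M.map (algebraMap A K) = 1)
    (hMY : M.map (algebraMap A K) * Y = W.map (algebraMap A K)) :
    Module.Projective A (Submodule.span A (Set.range fun i => M i)) := by
  set T := Submodule.span A (Set.range fun i => M i)
  let extι : (ι → A) →ₗ[A] (ι → K) := (Algebra.linearMap A K).compLeft ι
  let extκ : (κ → A) →ₗ[A] (κ → K) := (Algebra.linearMap A K).compLeft κ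
  have hT : LinearMap.range M.vecMulLinear = T := range_vecMulLinear M
  let π : (ι → A) →ₗ[A] T :=
    M.vecMulLinear.codRestrict T fun x => hT ▸ LinearMap.mem_range_self _ x
  let σ : T →ₗ[A] (ι → K) := Y.vecMulLinear.restrictScalars A ∘ₗ extκ ∘ₗ T.subtype
  -- `t = x M`, so `t Y = x (M Y) = x W` has entries in `A`
  have hσ (t : T) : σ t ∈ LinearMap.range extι := by
    obtain ⟨x, hx⟩ : (t : κ → A) ∈ LinearMap.range M.vecMulLinear := by rw [hT]; exact t.2
    refine ⟨x ᵥ* W, ?_⟩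
    change algebraMap A K ∘ (x ᵥ* W) = (algebraMap A K ∘ t) ᵥ* Y
    rw [← hx, vecMulLinear_apply, RingHom.comp_vecMul, RingHom.comp_vecMul, vecMul_vecMul, hMY]
  let E : T →ₗ[A] (ι → A) :=
    (LinearEquiv.ofInjective extι hf.comp_left).symm ∘ₗ σ.codRestrict _ hσ
  have hE (t : T) : algebraMap A K ∘ E t = (algebraMap A K ∘ t) ᵥ* Y :=
    LinearEquiv.ofInjective_symm_apply (f := extι) (h := hf.comp_left) ⟨σ t, hσ t⟩
  refine Module.Projective.of_split E π (LinearMap.ext fun t => Subtype.ext ?_)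
  apply hf.comp_left
  change algebraMap A K ∘ (E t ᵥ* M) = algebraMap A K ∘ t
  rw [RingHom.comp_vecMul, hE, vecMul_vecMul, hYM, vecMul_one]

end Matrix

theorem Hmat_transpose {F : Type*} [CommRing F] {n m : ℕ}
    (P : Matrix (Fin n) (Fin m) F) (C : Matrix (Fin m) (Fin n) F) :
    Hmat Pᵀ Cᵀ = (Hmat P C)ᵀ.submatrix Sum.swap Sum.swap := by
  have hPC : 1 + Pᵀ * Cᵀ = (1 + C * P)ᵀ := by rw [transpose_add, transpose_mul, transpose_one]
  have hCP : 1 + Cᵀ * Pᵀ = (1 + P * C)ᵀ := by rw [transpose_add, transpose_mul, transpose_one]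
  rw [Hmat, Hmat, hPC, hCP, ← transpose_nonsing_inv, ← transpose_nonsing_inv, ← transpose_mul,
    ← transpose_mul, inv_one_add_mul_mul_eq_mul_inv, inv_one_add_mul_mul_eq_mul_inv,
    fromBlocks_transpose, fromBlocks_submatrix_sum_swap_sum_swap, transpose_neg]

theorem fromRows_one_mul_fromCols_eq_sub_Hmat {F : Type*} [CommRing F] {n m : ℕ}
    {P : Matrix (Fin n) (Fin m) F} {C : Matrix (Fin m) (Fin n) F}
    (hPC : IsUnit (1 + P * C).det) :
    fromRows P 1 * fromCols (C * (1 + P * C)⁻¹) (1 + C * P)⁻¹ =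
      fromBlocks 1 0 0 0 - fromBlocks 1 0 0 (-1) * Hmat P C := by
  have hPCQ : P * (C * (1 + P * C)⁻¹) = 1 - (1 + P * C)⁻¹ := by
    rw [eq_sub_iff_add_eq, ← Matrix.mul_assoc, ← add_one_mul, add_comm,
      mul_nonsing_inv _ hPC]
  rw [fromRows_mul_fromCols, hPCQ, Hmat, fromBlocks_multiply]
  simp [sub_eq_add_neg, fromBlocks_neg, fromBlocks_add]

namespace Stabilizes

variable {A : Type*} [CommRing A] {n m : ℕ} {P : Matrix (Fin n) (Fin m) (FractionRing A)}
  {C : Matrix (Fin m) (Fin n) (FractionRing A)}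

protected theorem transpose (hC : Stabilizes P C) : Stabilizes Pᵀ Cᵀ := by
  refine ⟨?_, fun i j => ?_⟩
  · rw [← transpose_mul, ← transpose_one, ← transpose_add, det_transpose, det_one_add_mul_comm]
    exact hC.1
  · rw [Hmat_transpose]
    exact hC.2 _ _

theorem exists_map_eq_fromRows_one_mul_fromCols (hC : Stabilizes P C) :
    ∃ W : Matrix (Fin n ⊕ Fin m) (Fin n ⊕ Fin m) A, W.map (algebraMap A (FractionRing A)) =
      fromRows P 1 * fromCols (C * (1 + P * C)⁻¹) (1 + C * P)⁻¹ := by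
  choose H hH using fun i j => Set.mem_range.1 (hC.2 i j)
  refine ⟨fromBlocks 1 0 0 0 - fromBlocks 1 0 0 (-1) * of H, ?_⟩
  have hHmat : (of H).map (algebraMap A (FractionRing A)) = Hmat P C := ext hH
  rw [fromRows_one_mul_fromCols_eq_sub_Hmat hC.1, ← hHmat]
  simp [Matrix.map_sub, Matrix.map_mul, Matrix.map_neg, fromBlocks_map]

theorem projective_span_rows_fromRows (hC : Stabilizes P C) (N : Matrix (Fin n) (Fin m) A)
    (D : Matrix (Fin m) (Fin m) A) (hD : D.det ∈ nonZeroDivisors A)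
    (hPD : P * D.map (algebraMap A (FractionRing A)) = N.map (algebraMap A (FractionRing A))) :
    Module.Projective A (Submodule.span A (Set.range fun i => fromRows N D i)) := by
  set f := algebraMap A (FractionRing A)
  have hDunit : IsUnit (D.map f).det := by
    rw [show (D.map f).det = f D.det from (f.map_det D).symm]
    exact IsLocalization.map_units _ ⟨_, hD⟩
  have hCP : IsUnit (1 + C * P).det := det_one_add_mul_comm P C ▸ hC.1
  have hM : (fromRows N D).map f = fromRows P 1 * D.map f := by
    rw [fromRows_mul, Matrix.one_mul, hPD, fromRows_map]
  obtain ⟨W, hW⟩ := hC.exists_map_eq_fromRows_one_mul_fromCols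
  refine projective_span_rows_of_leftInverse (IsFractionRing.injective A _) _
    ((D.map f)⁻¹ * fromCols (C * (1 + P * C)⁻¹) (1 + C * P)⁻¹) W ?_ ?_
  · rw [hM, Matrix.mul_assoc, ← Matrix.mul_assoc _ (fromRows P 1),
      fromCols_mul_fromRows_one_eq_one hCP, Matrix.one_mul, nonsing_inv_mul _ hDunit]
  · rw [hM, hW, Matrix.mul_assoc, ← Matrix.mul_assoc (D.map f), mul_nonsing_inv _ hDunit,
      Matrix.one_mul]

end Stabilizes

theorem stmt_12_general {A : Type*} [CommRing A] {n m : ℕ}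
    (P : Matrix (Fin n) (Fin m) (FractionRing A))
    (hstab : ∃ C : Matrix (Fin m) (Fin n) (FractionRing A), Stabilizes P C) :
    (∀ (N : Matrix (Fin n) (Fin m) A) (D : Matrix (Fin m) (Fin m) A),
      D.det ∈ nonZeroDivisors A →
      P * D.map (algebraMap A (FractionRing A)) = N.map (algebraMap A (FractionRing A)) →
      Module.Projective A
        (Submodule.span A (Set.range fun i => Matrix.fromRows N D i))) ∧
    (∀ (Nt : Matrix (Fin n) (Fin m) A) (Dt : Matrix (Fin n) (Fin n) A),
      Dt.det ∈ nonZeroDivisors A →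
      Dt.map (algebraMap A (FractionRing A)) * P = Nt.map (algebraMap A (FractionRing A)) →
      Module.Projective A
        (Submodule.span A (Set.range fun j => (Matrix.fromCols Nt Dt)ᵀ j))) := by
  obtain ⟨C, hC⟩ := hstab
  refine ⟨hC.projective_span_rows_fromRows, fun Nt Dt hDt hPDt => ?_⟩
  have hPt := congrArg transpose hPDt
  rw [transpose_mul, ← transpose_map, ← transpose_map] at hPt
  rw [transpose_fromCols]
  exact hC.transpose.projective_span_rows_fromRows Ntᵀ Dtᵀ (by rwa [det_transpose]) hPt

/-- if a causal plant `P` is stabilizable then the modules `T_P`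
(row span of any right fraction) and `W_P` (column span of any left fraction) are
projective. -/
theorem stmt_12 {A : Type*} [CommRing A] {n m : ℕ}
    (Z : Ideal A) [Z.IsPrime]
    (hZ : ∀ a : A, a ∉ nonZeroDivisors A → a ∈ Z)
    (P : Matrix (Fin n) (Fin m) (FractionRing A))
    (hcausal : ∀ i j, ∃ na d : A, d ∉ Z ∧
      P i j * algebraMap A (FractionRing A) d = algebraMap A (FractionRing A) na)
    (hstab : ∃ C : Matrix (Fin m) (Fin n) (FractionRing A), Stabilizes P C) :
    (∀ (N : Matrix (Fin n) (Fin m) A) (D : Matrix (Fin m) (Fin m) A),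
      D.det ∈ nonZeroDivisors A →
      P * D.map (algebraMap A (FractionRing A)) = N.map (algebraMap A (FractionRing A)) →
      Module.Projective A
        (Submodule.span A (Set.range fun i => Matrix.fromRows N D i))) ∧
    (∀ (Nt : Matrix (Fin n) (Fin m) A) (Dt : Matrix (Fin n) (Fin n) A),
      Dt.det ∈ nonZeroDivisors A →
      Dt.map (algebraMap A (FractionRing A)) * P = Nt.map (algebraMap A (FractionRing A)) →
      Module.Projective A
        (Submodule.span A (Set.range fun j => (Matrix.fromCols Nt Dt)ᵀ j))) :=
  stmt_12_general P hstab
end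

section
/- Let A be a commutative ring, F its total ring of fractions, Z ⊊ A a prime ideal containing all zerodivisors of A, and P ∈ F^{n×m} a causal and stabilizable plant. Then there exists a stabilizing controller C of P that is causal, i.e., every entry of C lies in { n/d : n ∈ A, d ∈ A∖Z }. -/
open Matrix

set_option maxHeartbeats 2000000

section Helpers

variable {A B : Type*} [CommRing A] [CommRing B] (f : A →+* B)

lemma mapm_mul {p q r : ℕ} (M : Matrix (Fin p) (Fin q) A) (N : Matrix (Fin q) (Fin r) A) :
    (M * N).map f = M.map f * N.map f := by
  ext i j; simp [Matrix.mul_apply, map_sum, Matrix.map_apply]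

lemma mapm_smul {p q : ℕ} (a : A) (M : Matrix (Fin p) (Fin q) A) :
    (a • M).map f = f a • M.map f := by
  ext i j; simp [Matrix.map_apply, Matrix.smul_apply, smul_eq_mul]

lemma mapm_sub {p q : ℕ} (M N : Matrix (Fin p) (Fin q) A) :
    (M - N).map f = M.map f - N.map f := by
  ext i j; simp [Matrix.map_apply, Matrix.sub_apply]

lemma mapm_add {p q : ℕ} (M N : Matrix (Fin p) (Fin q) A) :
    (M + N).map f = M.map f + N.map f := by
  ext i j; simp [Matrix.map_apply, Matrix.add_apply]

lemma mapm_one {p : ℕ} : (1 : Matrix (Fin p) (Fin p) A).map f = 1 :=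
  Matrix.map_one f (map_zero f) (map_one f)

lemma mapm_inj {p q : ℕ} (hf : Function.Injective f)
    {M N : Matrix (Fin p) (Fin q) A} (h : M.map f = N.map f) : M = N := by
  ext i j; exact hf (congrFun (congrFun h i) j)

end Helpers

/-- If `ker M ∩ ker N = 0` over a field, there is `X` such that `M - c • X * N` is
nonsingular for every `c ≠ 0`. -/
lemma lemA {K : Type*} [Field K] {m n : ℕ}
    (M : Matrix (Fin m) (Fin m) K) (N : Matrix (Fin n) (Fin m) K)
    (h : ∀ v : Fin m → K, M.mulVec v = 0 → N.mulVec v = 0 → v = 0) :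
    ∃ X : Matrix (Fin m) (Fin n) K, ∀ c : K, c ≠ 0 → (M - c • (X * N)).det ≠ 0 := by
  classical
  set f : (Fin m → K) →ₗ[K] (Fin m → K) := M.mulVecLin with hf
  set g : (Fin m → K) →ₗ[K] (Fin n → K) := N.mulVecLin with hg
  obtain ⟨W, hW⟩ := Submodule.exists_isCompl (LinearMap.range f)
  set g' : (LinearMap.ker f) →ₗ[K] (Fin n → K) := g.comp (LinearMap.ker f).subtype with hg'd
  have hg' : Function.Injective g' := by
    rw [← LinearMap.ker_eq_bot]
    apply (Submodule.eq_bot_iff _).2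
    rintro ⟨v, hv⟩ hgv
    have h1 : M.mulVec v = 0 := hv
    have h2 : N.mulVec v = 0 := LinearMap.mem_ker.mp hgv
    exact Subtype.ext (h v h1 h2)
  have hfin : Module.finrank K (LinearMap.ker f) = Module.finrank K W := by
    have h2 := LinearMap.finrank_range_add_finrank_ker f
    have h3 := Submodule.finrank_add_eq_of_isCompl hW
    omega
  let iso : (LinearMap.ker f) ≃ₗ[K] W := LinearEquiv.ofFinrankEq _ _ hfin
  let e : (LinearMap.ker f) ≃ₗ[K] LinearMap.range g' := LinearEquiv.ofInjective g' hg'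
  obtain ⟨W', hW'⟩ := Submodule.exists_isCompl (LinearMap.range g')
  let proj := (LinearMap.range g').linearProjOfIsCompl W' hW'
  let ψ : (Fin n → K) →ₗ[K] (Fin m → K) :=
    W.subtype ∘ₗ (iso : (LinearMap.ker f) →ₗ[K] W) ∘ₗ
      (e.symm : LinearMap.range g' →ₗ[K] (LinearMap.ker f)) ∘ₗ proj
  refine ⟨LinearMap.toMatrix' ψ, ?_⟩
  intro c hc hdet
  obtain ⟨v, hv0, hv⟩ := (Matrix.exists_mulVec_eq_zero_iff).2 hdet
  have hXN : ((LinearMap.toMatrix' ψ) * N).mulVec v = ψ (g v) := by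
    rw [← Matrix.mulVec_mulVec]
    have : (LinearMap.toMatrix' ψ).mulVec (N.mulVec v) = ψ (N.mulVec v) := by
      rw [← Matrix.toLin'_apply, Matrix.toLin'_toMatrix']
    exact this
  have hkey : f v = c • ψ (g v) := by
    have := hv
    rw [Matrix.sub_mulVec, sub_eq_zero, Matrix.smul_mulVec, hXN] at this
    exact this
  have hmemW : c • ψ (g v) ∈ W := by
    refine W.smul_mem c ?_
    exact (iso ((e.symm) (proj (g v)))).2
  have hfv0 : f v = 0 := by
    refine Submodule.disjoint_def.mp hW.disjoint _ (LinearMap.mem_range_self f v) ?_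
    rw [hkey]; exact hmemW
  have hψ0 : ψ (g v) = 0 := by
    have : c • ψ (g v) = 0 := by rw [← hkey, hfv0]
    rcases smul_eq_zero.mp this with h' | h'
    · exact absurd h' hc
    · exact h'
  set vv : LinearMap.ker f := ⟨v, hfv0⟩ with hvv
  have hgv : g v = g' vv := rfl
  have hproj : proj (g v) = ⟨g' vv, LinearMap.mem_range_self g' vv⟩ := by
    rw [hgv]
    exact Submodule.linearProjOfIsCompl_apply_left hW' ⟨g' vv, LinearMap.mem_range_self g' vv⟩
  have hesymm : e.symm ⟨g' vv, LinearMap.mem_range_self g' vv⟩ = vv := by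
    apply e.injective
    rw [LinearEquiv.apply_symm_apply]
    ext
    simp [e, LinearEquiv.ofInjective_apply]
  have heq : ψ (g v) = (iso vv : Fin m → K) := by
    show W.subtype (iso (e.symm (proj (g v)))) = _
    rw [hproj, hesymm]
    rfl
  rw [heq] at hψ0
  have h0 : iso vv = 0 := Submodule.coe_eq_zero.mp hψ0
  have : vv = 0 := iso.map_eq_zero_iff.mp h0
  exact hv0 (by simpa [hvv] using congrArg Subtype.val this)

/-- a stabilizable causal plant has at least one causal stabilizing
controller. -/
theorem stmt_15 {A : Type*} [CommRing A] {n m : ℕ}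
    (Z : Ideal A) [Z.IsPrime]
    (hZ : ∀ a : A, a ∉ nonZeroDivisors A → a ∈ Z)
    (P : Matrix (Fin n) (Fin m) (FractionRing A))
    (hcausal : ∀ i j, ∃ na d : A, d ∉ Z ∧
      P i j * algebraMap A (FractionRing A) d = algebraMap A (FractionRing A) na)
    (hstab : ∃ C : Matrix (Fin m) (Fin n) (FractionRing A), Stabilizes P C) :
    ∃ C : Matrix (Fin m) (Fin n) (FractionRing A), Stabilizes P C ∧
      ∀ i j, ∃ na d : A, d ∉ Z ∧
        C i j * algebraMap A (FractionRing A) d = algebraMap A (FractionRing A) na := by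
  classical
  obtain ⟨C, hC⟩ := hstab
  set ι : A →+* (FractionRing A) := algebraMap A (FractionRing A) with hιdef
  have ιinj : Function.Injective ι := IsFractionRing.injective A (FractionRing A)
  -- a common denominator d for P
  choose na de hde hPd using hcausal
  set d : A := ∏ p : Fin n × Fin m, de p.1 p.2 with hddef
  have hd : d ∉ Z := by
    intro hmem
    obtain ⟨p, -, hp⟩ := Ideal.IsPrime.prod_mem_iff.mp hmem
    exact hde p.1 p.2 hp
  set N : Matrix (Fin n) (Fin m) A :=
    Matrix.of (fun i j => na i j * ∏ p ∈ Finset.univ.erase (i, j), de p.1 p.2) with hNdef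
  have hNmap : N.map ι = ι d • P := by
    ext i j
    have hsplit : d = de i j * ∏ p ∈ Finset.univ.erase (i, j), de p.1 p.2 := by
      rw [hddef]
      exact (Finset.mul_prod_erase Finset.univ _ (Finset.mem_univ (i, j))).symm
    have hval : ι (N i j) = P i j * ι d := by
      rw [hsplit]
      show ι (na i j * _) = _
      rw [_root_.map_mul, _root_.map_mul, ← hPd i j, mul_assoc]
    rw [Matrix.map_apply, hval, Matrix.smul_apply, smul_eq_mul, mul_comm]
  -- facts about the given stabilizing controller
  have hu : IsUnit (1 + P * C).det := hC.1
  have hw : IsUnit (1 + C * P).det := by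
    rw [Matrix.det_one_add_mul_comm]; exact hu
  set u : Matrix (Fin n) (Fin n) (FractionRing A) := 1 + P * C with hudef
  set w : Matrix (Fin m) (Fin m) (FractionRing A) := 1 + C * P with hwdef
  have hw1 : C * P = w - 1 := by rw [hwdef]; abel
  have hu1 : P * C = u - 1 := by rw [hudef]; abel
  have huP : u * P = P * w := by
    rw [hudef, hwdef, Matrix.add_mul, Matrix.mul_add, Matrix.one_mul, Matrix.mul_one,
      Matrix.mul_assoc]
  have hinvP : u⁻¹ * P = P * w⁻¹ := by
    have h2 : P * w * w⁻¹ = P := by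
      rw [Matrix.mul_assoc, Matrix.mul_nonsing_inv w hw, Matrix.mul_one]
    calc u⁻¹ * P = u⁻¹ * (u * P * w⁻¹) := by rw [huP, h2]
    _ = u⁻¹ * u * (P * w⁻¹) := by rw [Matrix.mul_assoc u P w⁻¹, ← Matrix.mul_assoc u⁻¹ u (P * w⁻¹)]
    _ = P * w⁻¹ := by rw [Matrix.nonsing_inv_mul u hu, Matrix.one_mul]
  have hQP : (C * u⁻¹) * P = 1 - w⁻¹ := by
    calc (C * u⁻¹) * P = C * (P * w⁻¹) := by rw [Matrix.mul_assoc, hinvP]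
    _ = (C * P) * w⁻¹ := by rw [Matrix.mul_assoc]
    _ = (w - 1) * w⁻¹ := by rw [hw1]
    _ = 1 - w⁻¹ := by rw [Matrix.sub_mul, Matrix.mul_nonsing_inv w hw, Matrix.one_mul]
  have hPQ : P * (C * u⁻¹) = 1 - u⁻¹ := by
    calc P * (C * u⁻¹) = (P * C) * u⁻¹ := by rw [Matrix.mul_assoc]
    _ = (u - 1) * u⁻¹ := by rw [hu1]
    _ = 1 - u⁻¹ := by rw [Matrix.sub_mul, Matrix.mul_nonsing_inv u hu, Matrix.one_mul]
  -- extract the entries of H(P,C)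
  have hH := hC.2
  have hK₁e : ∀ i j, u⁻¹ i j ∈ Set.range ι := by
    intro i j
    simpa [Hmat, hudef] using hH (Sum.inl i) (Sum.inl j)
  have hK₂e : ∀ i j, w⁻¹ i j ∈ Set.range ι := by
    intro i j
    simpa [Hmat, hwdef] using hH (Sum.inr i) (Sum.inr j)
  have hQe : ∀ i j, (C * u⁻¹) i j ∈ Set.range ι := by
    intro i j
    simpa [Hmat, hudef] using hH (Sum.inr i) (Sum.inl j)
  have hLe : ∀ i j, (P * w⁻¹) i j ∈ Set.range ι := by
    intro i j
    obtain ⟨a, ha⟩ := hH (Sum.inl i) (Sum.inr j)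
    refine ⟨-a, ?_⟩
    have hneg : (Hmat P C) (Sum.inl i) (Sum.inr j) = -((P * w⁻¹) i j) := by
      simp [Hmat, hwdef]
    rw [map_neg, ha, hneg, neg_neg]
  choose K₁f hK₁f using hK₁e
  choose K₂f hK₂f using hK₂e
  choose Qf hQf using hQe
  choose Lf hLf using hLe
  set K₁ : Matrix (Fin n) (Fin n) A := Matrix.of K₁f with hK₁def
  set K₂ : Matrix (Fin m) (Fin m) A := Matrix.of K₂f with hK₂def
  set Q : Matrix (Fin m) (Fin n) A := Matrix.of Qf with hQdef
  set L : Matrix (Fin n) (Fin m) A := Matrix.of Lf with hLdef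
  have hK₁m : K₁.map ι = u⁻¹ := by ext i j; exact hK₁f i j
  have hK₂m : K₂.map ι = w⁻¹ := by ext i j; exact hK₂f i j
  have hQm : Q.map ι = C * u⁻¹ := by ext i j; exact hQf i j
  have hLm : L.map ι = P * w⁻¹ := by ext i j; exact hLf i j
  -- the key A-level identity:  Q * N = d • (1 - K₂)
  have hQN : Q * N = d • ((1 : Matrix (Fin m) (Fin m) A) - K₂) := by
    apply mapm_inj ι ιinj
    rw [mapm_mul, mapm_smul, mapm_sub, mapm_one, hQm, hK₂m, hNmap, Matrix.mul_smul, hQP]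
  -- pass to the fraction field of A/Z
  have hφ : ∀ a : A, (algebraMap (A ⧸ Z) (FractionRing (A ⧸ Z))).comp
      (Ideal.Quotient.mk Z) a = 0 ↔ a ∈ Z := by
    intro a
    rw [RingHom.comp_apply]
    constructor
    · intro h
      have := IsFractionRing.injective (A ⧸ Z) (FractionRing (A ⧸ Z)) (by simpa using h)
      exact Ideal.Quotient.eq_zero_iff_mem.mp this
    · intro h
      rw [Ideal.Quotient.eq_zero_iff_mem.mpr h, map_zero]
  set φ : A →+* FractionRing (A ⧸ Z) :=
    (algebraMap (A ⧸ Z) (FractionRing (A ⧸ Z))).comp (Ideal.Quotient.mk Z) with hφdef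
  have hφd : φ d ≠ 0 := fun h => hd ((hφ d).mp h)
  -- the kernel condition
  have hker : ∀ v : Fin m → FractionRing (A ⧸ Z),
      (K₂.map φ).mulVec v = 0 → (N.map φ).mulVec v = 0 → v = 0 := by
    intro v h1 h2
    have hQNk : (Q.map φ) * (N.map φ) =
        φ d • ((1 : Matrix (Fin m) (Fin m) (FractionRing (A ⧸ Z))) - K₂.map φ) := by
      have hmm := congrArg (fun (M : Matrix (Fin m) (Fin m) A) => M.map φ) hQN
      simpa [mapm_mul, mapm_smul, mapm_sub, mapm_one] using hmm
    have h3 : ((Q.map φ) * (N.map φ)).mulVec v = 0 := by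
      rw [← Matrix.mulVec_mulVec, h2, Matrix.mulVec_zero]
    rw [hQNk, Matrix.smul_mulVec, Matrix.sub_mulVec, Matrix.one_mulVec, h1,
      sub_zero] at h3
    funext i
    have h4 := congrFun h3 i
    rw [Pi.smul_apply, smul_eq_mul] at h4
    rcases mul_eq_zero.mp h4 with h' | h'
    · exact absurd h' hφd
    · simpa using h'
  obtain ⟨X, hX⟩ := lemA (K₂.map φ) (N.map φ) hker
  -- clear denominators of X
  obtain ⟨b, hb⟩ := IsLocalization.exist_integer_multiples (nonZeroDivisors (A ⧸ Z))
    (Finset.univ : Finset (Fin m × Fin n)) (fun p => X p.1 p.2)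
  have hb' : ∀ (i : Fin m) (j : Fin n), ∃ r : A ⧸ Z,
      algebraMap (A ⧸ Z) (FractionRing (A ⧸ Z)) r = (b : A ⧸ Z) • X i j :=
    fun i j => RingHom.mem_range.mp (hb (i, j) (Finset.mem_univ _))
  choose X₁ hX₁ using hb'
  have hsur := Ideal.Quotient.mk_surjective (I := Z)
  choose S0 hS0 using fun (i : Fin m) (j : Fin n) => hsur (X₁ i j)
  set S : Matrix (Fin m) (Fin n) A := Matrix.of S0 with hSdef
  obtain ⟨e₀, he₀⟩ := hsur (b : A ⧸ Z)
  have he₀Z : e₀ ∉ Z := by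
    intro h
    have hb0 : (b : A ⧸ Z) = 0 := by
      rw [← he₀]; exact Ideal.Quotient.eq_zero_iff_mem.mpr h
    exact nonZeroDivisors.coe_ne_zero b hb0
  have hφe₀ : φ e₀ ≠ 0 := fun h => he₀Z ((hφ e₀).mp h)
  have hSX : S.map φ = φ e₀ • X := by
    ext i j
    rw [Matrix.map_apply, Matrix.smul_apply]
    show φ (S0 i j) = φ e₀ • X i j
    have h1 : φ (S0 i j) = algebraMap (A ⧸ Z) (FractionRing (A ⧸ Z)) (X₁ i j) := by
      rw [hφdef, RingHom.comp_apply, hS0]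
    have h2 : φ e₀ = algebraMap (A ⧸ Z) (FractionRing (A ⧸ Z)) (b : A ⧸ Z) := by
      rw [hφdef, RingHom.comp_apply, he₀]
    rw [h1, hX₁, h2, Algebra.smul_def, smul_eq_mul]
  -- the perturbed matrices
  set T : Matrix (Fin m) (Fin m) A := K₂ - (d * d) • (S * N) with hTdef
  set δ : A := T.det with hδdef
  have hδZ : δ ∉ Z := by
    intro hmem
    have hφδ : φ δ = 0 := (hφ δ).mpr hmem
    have hTk : T.map φ = K₂.map φ - (φ d * φ d * φ e₀) • (X * N.map φ) := by
      rw [hTdef, mapm_sub, mapm_smul, mapm_mul, hSX, _root_.map_mul, Matrix.smul_mul,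
        smul_smul, mul_assoc (φ d) (φ d)]
    have hdet0 : (T.map φ).det = 0 := by
      have hh : φ T.det = (T.map φ).det := by
        rw [RingHom.map_det, RingHom.mapMatrix_apply]
      rw [← hh, ← hδdef, hφδ]
    rw [hTk] at hdet0
    exact hX _ (mul_ne_zero (mul_ne_zero hφd hφd) hφe₀) hdet0
  have hδ0 : δ ∈ nonZeroDivisors A := by
    by_contra h
    exact hδZ (hZ δ h)
  have hιδ : IsUnit (ι δ) :=
    IsLocalization.map_units (FractionRing A) (⟨δ, hδ0⟩ : nonZeroDivisors A)
  -- the new controller C'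
  set Q' : Matrix (Fin m) (Fin n) A := Q + (d * d * d) • S with hQ'def
  have hdetTF : (T.map ι).det = ι δ := by
    rw [hδdef, RingHom.map_det, RingHom.mapMatrix_apply]
  have hdetTF' : IsUnit (T.map ι).det := by rw [hdetTF]; exact hιδ
  have hTQ'P : 1 - (Q'.map ι) * P = T.map ι := by
    have h1 : (Q'.map ι) * P = Q.map ι * P + ι (d * d) • ((S.map ι) * (N.map ι)) := by
      rw [hQ'def, mapm_add, mapm_smul, Matrix.add_mul, Matrix.smul_mul, hNmap,
        Matrix.mul_smul, smul_smul, ← _root_.map_mul]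
    rw [h1, hQm, hQP, hTdef, mapm_sub, mapm_smul, mapm_mul, hK₂m]
    abel
  set C' : Matrix (Fin m) (Fin n) (FractionRing A) := (T.map ι)⁻¹ * (Q'.map ι) with hC'def
  have hTinv : (T.map ι)⁻¹ * (T.map ι) = 1 := Matrix.nonsing_inv_mul _ hdetTF'
  have hCQ' : C' * (1 - P * (Q'.map ι)) = Q'.map ι := by
    have hmid : (Q'.map ι) * (1 - P * (Q'.map ι)) = (1 - (Q'.map ι) * P) * (Q'.map ι) := by
      rw [Matrix.mul_sub, Matrix.sub_mul, Matrix.mul_one, Matrix.one_mul, Matrix.mul_assoc]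
    calc C' * (1 - P * (Q'.map ι))
        = (T.map ι)⁻¹ * ((Q'.map ι) * (1 - P * (Q'.map ι))) := by
          rw [hC'def, Matrix.mul_assoc]
    _ = (T.map ι)⁻¹ * ((T.map ι) * (Q'.map ι)) := by rw [hmid, hTQ'P]
    _ = Q'.map ι := by rw [← Matrix.mul_assoc, hTinv, Matrix.one_mul]
  have huC' : (1 + P * C') * (1 - P * (Q'.map ι)) = 1 := by
    rw [Matrix.add_mul, Matrix.one_mul, Matrix.mul_assoc, hCQ']
    abel
  have hu' : IsUnit (1 + P * C').det := Matrix.isUnit_det_of_right_inverse huC'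
  have hinv1 : (1 + P * C')⁻¹ = 1 - P * (Q'.map ι) := Matrix.inv_eq_right_inv huC'
  have hQ'Palt : (Q'.map ι) * P = 1 - T.map ι := by
    rw [← hTQ'P, sub_sub_cancel]
  have hwC' : (1 + C' * P) * (T.map ι) = 1 := by
    have h5 : C' * P * (T.map ι) = 1 - T.map ι := by
      calc C' * P * (T.map ι) = (T.map ι)⁻¹ * (((Q'.map ι) * P) * (T.map ι)) := by
            rw [hC'def, Matrix.mul_assoc, Matrix.mul_assoc, Matrix.mul_assoc]
      _ = (T.map ι)⁻¹ * ((1 - T.map ι) * (T.map ι)) := by rw [hQ'Palt]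
      _ = (T.map ι)⁻¹ * ((T.map ι) * (1 - T.map ι)) := by
            have hcomm : (1 - T.map ι) * (T.map ι) = (T.map ι) * (1 - T.map ι) := by
              rw [Matrix.sub_mul, Matrix.mul_sub, Matrix.one_mul, Matrix.mul_one]
            rw [hcomm]
      _ = 1 - T.map ι := by rw [← Matrix.mul_assoc, hTinv, Matrix.one_mul]
    rw [Matrix.add_mul, Matrix.one_mul, h5]
    abel
  have hinv2 : (1 + C' * P)⁻¹ = T.map ι := Matrix.inv_eq_right_inv hwC'
  have hPQ'row : 1 - P * (Q'.map ι) = (K₁ - (d * d) • (N * S)).map ι := by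
    have h1 : P * (Q'.map ι) = P * (Q.map ι) + ι (d * d) • ((N.map ι) * (S.map ι)) := by
      rw [hQ'def, mapm_add, mapm_smul, Matrix.mul_add, Matrix.mul_smul, hNmap,
        Matrix.smul_mul, smul_smul, ← _root_.map_mul]
    rw [h1, hQm, hPQ, mapm_sub, mapm_smul, mapm_mul, hK₁m]
    abel
  have hPT : P * (T.map ι) = (L - d • (N * S * N)).map ι := by
    have h2 : ι (d * d) • (P * ((S.map ι) * (N.map ι)))
        = ι d • (((N.map ι) * (S.map ι)) * (N.map ι)) := by
      calc ι (d * d) • (P * ((S.map ι) * (N.map ι)))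
          = ι d • ((ι d • P) * ((S.map ι) * (N.map ι))) := by
            rw [_root_.map_mul, mul_smul, Matrix.smul_mul]
      _ = ι d • ((N.map ι) * ((S.map ι) * (N.map ι))) := by rw [← hNmap]
      _ = ι d • (((N.map ι) * (S.map ι)) * (N.map ι)) := by rw [Matrix.mul_assoc]
    calc P * (T.map ι)
        = P * (K₂.map ι) - ι (d * d) • (P * ((S.map ι) * (N.map ι))) := by
          rw [hTdef, mapm_sub, mapm_smul, mapm_mul, Matrix.mul_sub, Matrix.mul_smul]
    _ = L.map ι - ι d • (((N.map ι) * (S.map ι)) * (N.map ι)) := by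
          rw [hK₂m, ← hLm, h2]
    _ = (L - d • (N * S * N)).map ι := by
          rw [mapm_sub, mapm_smul, mapm_mul, mapm_mul]
  refine ⟨C', ⟨hu', ?_⟩, ?_⟩
  · intro i j
    rcases i with i | i <;> rcases j with j | j
    · have hbl : Hmat P C' (Sum.inl i) (Sum.inl j) = ((K₁ - (d * d) • (N * S)).map ι) i j := by
        simp only [Hmat, Matrix.fromBlocks_apply₁₁]
        rw [hinv1, hPQ'row]
      rw [hbl]
      exact ⟨(K₁ - (d * d) • (N * S)) i j, rfl⟩
    · have hbl : Hmat P C' (Sum.inl i) (Sum.inr j)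
          = -(((L - d • (N * S * N)).map ι) i j) := by
        simp only [Hmat, Matrix.fromBlocks_apply₁₂, Matrix.neg_apply]
        rw [hinv2, hPT]
      rw [hbl]
      exact ⟨-((L - d • (N * S * N)) i j), by rw [map_neg]; rfl⟩
    · have hbl : Hmat P C' (Sum.inr i) (Sum.inl j) = (Q'.map ι) i j := by
        simp only [Hmat, Matrix.fromBlocks_apply₂₁]
        rw [hinv1, hCQ']
      rw [hbl]
      exact ⟨Q' i j, rfl⟩
    · have hbl : Hmat P C' (Sum.inr i) (Sum.inr j) = (T.map ι) i j := by
        simp only [Hmat, Matrix.fromBlocks_apply₂₂]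
        rw [hinv2]
      rw [hbl]
      exact ⟨T i j, rfl⟩
  · intro i j
    refine ⟨(T.adjugate * Q') i j, δ, hδZ, ?_⟩
    have hadj : (ι δ) • C' = (T.adjugate * Q').map ι := by
      rw [hC'def, ← hdetTF]
      calc (T.map ι).det • ((T.map ι)⁻¹ * (Q'.map ι))
          = ((T.map ι).det • (T.map ι)⁻¹) * (Q'.map ι) := by rw [Matrix.smul_mul]
      _ = (T.map ι).adjugate * (Q'.map ι) := by
          rw [Matrix.inv_def, smul_smul, Ring.mul_inverse_cancel _ hdetTF', one_smul]
      _ = (T.adjugate * Q').map ι := by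
          have hadj2 : T.adjugate.map ι = (T.map ι).adjugate := by
            have h3 := RingHom.map_adjugate ι T
            rwa [RingHom.mapMatrix_apply, RingHom.mapMatrix_apply] at h3
          rw [mapm_mul, hadj2]
    have hentry := congrFun (congrFun hadj i) j
    rw [Matrix.smul_apply, smul_eq_mul] at hentry
    rw [mul_comm]
    exact hentry
end

section
/- Let A be a commutative ring, F its total ring of fractions, Z ⊊ A a prime ideal containing all zerodivisors of A. Suppose P ∈ F^{n×m} is strictly causal (every entry of P has the form n/d with n ∈ Z, d ∈ A∖Z) and stabilizable. Then every stabilizing controller C of P is causal (every entry of C has the form n/d with n ∈ A, d ∈ A∖Z). -/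
open Matrix

/-!
Since `Z` contains the zerodivisors, `A_Z` embeds in `F`; the causal elements of `F` are the
image of the local ring `A_Z`, and the strictly causal ones the image of its maximal ideal.
Over `F`, the block `H₂₁ = C (E + PC)⁻¹` of `H(P,C)` satisfies
`(E - H₂₁ P) C = H₂₁`. Lifting `H₂₁` and `P` to `A_Z`, the matrix `E - H₂₁ P` is congruent to `E`
modulo the maximal ideal, so it is invertible over `A_Z`, and `C = (E - H₂₁ P)⁻¹ H₂₁` is the image
of a matrix over `A_Z`.
-/

open IsLocalRing

namespace Matrix

variable {ι κ : Type*} [Fintype κ] [DecidableEq κ]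

theorem one_sub_mul_inv_mul_mul_eq [Fintype ι] [DecidableEq ι] {K : Type*} [CommRing K]
    (P : Matrix ι κ K) (C : Matrix κ ι K) (hdet : IsUnit (1 + P * C).det) :
    (1 - C * (1 + P * C)⁻¹ * P) * C = C * (1 + P * C)⁻¹ := by
  set H := C * (1 + P * C)⁻¹
  have hH : H * (1 + P * C) = C := by
    rw [Matrix.mul_assoc, Matrix.nonsing_inv_mul _ hdet, Matrix.mul_one]
  rw [Matrix.mul_add, Matrix.mul_one, ← Matrix.mul_assoc] at hH
  rw [Matrix.sub_mul, Matrix.one_mul, sub_eq_iff_eq_add, hH]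

theorem isUnit_det_one_sub {R : Type*} [CommRing R] [IsLocalRing R]
    (Q : Matrix κ κ R) (hQ : ∀ i j, Q i j ∈ maximalIdeal R) : IsUnit (1 - Q).det := by
  have hres : (1 - Q).map (residue R) = 1 := by
    rw [Matrix.map_sub _ (map_sub _), Matrix.map_one _ (map_zero _) (map_one _), sub_eq_self]
    ext i j
    exact (residue_eq_zero_iff _).mpr (hQ i j)
  rw [← residue_ne_zero_iff_isUnit, RingHom.map_det, RingHom.mapMatrix_apply, hres, det_one]
  exact one_ne_zero

theorem eq_map_inv_mul_of_map_mul_eq {R K : Type*} [CommRing R] [CommRing K]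
    (f : R →+* K) {M : Matrix κ κ R} (hM : IsUnit M.det) {N : Matrix κ ι R} {C : Matrix κ ι K}
    (h : M.map f * C = N.map f) : C = (M⁻¹ * N).map f := by
  rw [Matrix.map_mul, ← h, ← Matrix.mul_assoc, ← Matrix.map_mul, Matrix.nonsing_inv_mul _ hM,
    Matrix.map_one _ (map_zero f) (map_one f), Matrix.one_mul]

theorem mem_range_of_mem_range_mul_inv_one_add_mul [Fintype ι] [DecidableEq ι]
    {R K : Type*} [CommRing R] [IsLocalRing R] [CommRing K] (f : R →+* K)
    {P : Matrix ι κ K} {C : Matrix κ ι K}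
    (hdet : IsUnit (1 + P * C).det) (hP : ∀ i j, ∃ p ∈ maximalIdeal R, f p = P i j)
    (hH : ∀ i j, (C * (1 + P * C)⁻¹ : Matrix κ ι K) i j ∈ Set.range f) (i : κ) (j : ι) :
    C i j ∈ Set.range f := by
  choose P' hP'max hP' using hP
  choose H' hH' using hH
  change Matrix ι κ R at P'
  change Matrix κ ι R at H'
  have hmap : (1 - H' * P').map f * C = H'.map f := by
    have hP'P : P'.map f = P := Matrix.ext hP'
    have hH'H : H'.map f = C * (1 + P * C)⁻¹ := Matrix.ext hH'
    rw [Matrix.map_sub _ (map_sub f), Matrix.map_one _ (map_zero f) (map_one f), Matrix.map_mul,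
      hP'P, hH'H, one_sub_mul_inv_mul_mul_eq P C hdet]
  have hunit : IsUnit (1 - H' * P').det :=
    isUnit_det_one_sub _ fun a b => Ideal.sum_mem _ fun k _ =>
      Ideal.mul_mem_left _ _ (hP'max k b)
  rw [eq_map_inv_mul_of_map_mul_eq f hunit hmap]
  exact ⟨_, rfl⟩

end Matrix

namespace Localization.AtPrime

variable {A K : Type*} [CommRing A] [CommRing K] [Algebra A K] (Z : Ideal A) [Z.IsPrime]
  [Algebra (Localization.AtPrime Z) K] [IsScalarTower A (Localization.AtPrime Z) K]

theorem exists_mem_maximalIdeal_algebraMap_eq {x : K} {na d : A} (hna : na ∈ Z)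
    (hd : d ∉ Z) (h : x * algebraMap A K d = algebraMap A K na) :
    ∃ p ∈ maximalIdeal (Localization.AtPrime Z), algebraMap (Localization.AtPrime Z) K p = x := by
  set p := IsLocalization.mk' (Localization.AtPrime Z) na (⟨d, hd⟩ : Z.primeCompl)
  refine ⟨p, (IsLocalization.AtPrime.mk'_mem_maximal_iff _ Z _ _).mpr hna, ?_⟩
  have hunit : IsUnit (algebraMap A K d) := by
    rw [IsScalarTower.algebraMap_apply A (Localization.AtPrime Z) K]
    exact (IsLocalization.map_units _ (⟨d, hd⟩ : Z.primeCompl)).map _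
  refine hunit.mul_right_cancel ?_
  rw [h, IsScalarTower.algebraMap_apply A (Localization.AtPrime Z) K, ← map_mul,
    IsLocalization.mk'_spec, ← IsScalarTower.algebraMap_apply]

theorem exists_mul_eq_of_mem_range_algebraMap {x : K}
    (hx : x ∈ Set.range (algebraMap (Localization.AtPrime Z) K)) :
    ∃ na d : A, d ∉ Z ∧ x * algebraMap A K d = algebraMap A K na := by
  obtain ⟨p, rfl⟩ := hx
  obtain ⟨⟨na, d⟩, rfl⟩ := IsLocalization.mk'_surjective Z.primeCompl p
  refine ⟨na, d, d.2, ?_⟩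
  rw [IsScalarTower.algebraMap_apply A (Localization.AtPrime Z) K, ← map_mul,
    IsLocalization.mk'_spec, ← IsScalarTower.algebraMap_apply]

end Localization.AtPrime

theorem stmt_16_general {A : Type*} [CommRing A] {n m : ℕ}
    (Z : Ideal A) [Z.IsPrime]
    (hZ : ∀ a : A, a ∉ nonZeroDivisors A → a ∈ Z)
    (P : Matrix (Fin n) (Fin m) (FractionRing A))
    (hstrict : ∀ i j, ∃ na d : A, na ∈ Z ∧ d ∉ Z ∧
      P i j * algebraMap A (FractionRing A) d = algebraMap A (FractionRing A) na) :
    ∀ C : Matrix (Fin m) (Fin n) (FractionRing A), Stabilizes P C →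
      ∀ i j, ∃ na d : A, d ∉ Z ∧
        C i j * algebraMap A (FractionRing A) d = algebraMap A (FractionRing A) na := by
  rintro C ⟨hdet, hH⟩ i j
  have hle : Z.primeCompl ≤ nonZeroDivisors A := fun a ha => by_contra fun h => ha (hZ a h)
  let _ := IsLocalization.localizationAlgebraOfSubmonoidLe (Localization.AtPrime Z)
    (FractionRing A) _ _ hle
  have := IsLocalization.localization_isScalarTower_of_submonoid_le (Localization.AtPrime Z)
    (FractionRing A) _ _ hle
  refine Localization.AtPrime.exists_mul_eq_of_mem_range_algebraMap Z <|
    mem_range_of_mem_range_mul_inv_one_add_mul _ hdet (fun k l => ?_) (fun k l => ?_) i j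
  · obtain ⟨na, d, hna, hd, h⟩ := hstrict k l
    exact Localization.AtPrime.exists_mem_maximalIdeal_algebraMap_eq Z hna hd h
  · obtain ⟨a, ha⟩ := hH (Sum.inr k) (Sum.inl l)
    exact ⟨algebraMap A _ a, (IsScalarTower.algebraMap_apply _ _ _ a).symm.trans ha⟩

/-- every stabilizing controller of a stabilizable strictly causal
plant is causal. -/
theorem stmt_16 {A : Type*} [CommRing A] {n m : ℕ}
    (Z : Ideal A) [Z.IsPrime]
    (hZ : ∀ a : A, a ∉ nonZeroDivisors A → a ∈ Z)
    (P : Matrix (Fin n) (Fin m) (FractionRing A))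
    (hstrict : ∀ i j, ∃ na d : A, na ∈ Z ∧ d ∉ Z ∧
      P i j * algebraMap A (FractionRing A) d = algebraMap A (FractionRing A) na)
    (hstab : ∃ C : Matrix (Fin m) (Fin n) (FractionRing A), Stabilizes P C) :
    ∀ C : Matrix (Fin m) (Fin n) (FractionRing A), Stabilizes P C →
      ∀ i j, ∃ na d : A, d ∉ Z ∧
        C i j * algebraMap A (FractionRing A) d = algebraMap A (FractionRing A) na :=
  stmt_16_general Z hZ P hstrict
end

section
/- Let A = ℝ[z², z³] be the subring of ℝ[z] generated by z² and z³, with field of fractions F = ℝ(z). Then the column vector P = [(1−z³)/(1−z²), (1−8z³)/(1−4z²)]ᵗ ∈ F^{2×1} admits no right-coprime factorization over A: there exist no N ∈ A^{2×1}, d ∈ A∖{0} and Ỹ ∈ A^{1×2}, x̃ ∈ A with P = N d⁻¹ and Ỹ N + x̃ d = 1. -/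
/-!
Over `ℝ[z]` the entries reduce to `(1 + z + z²)/(1 + z)` and `(1 + 2z + 4z²)/(1 + 2z)`. In any
factorization `P = N d⁻¹` with a Bézout identity, `d` is divisible by the coprime denominators
`1 + z` and `1 + 2z`, while multiplying the Bézout identity by `(1 + z)(1 + 2z)` shows that `d`
divides their product. So `d` is a nonzero constant times `1 + 3z + 2z²`, whose `z`-coefficient
is not zero, and `d ∉ ℝ[z², z³]`.
-/

open Polynomial

theorem Polynomial.coeff_one_eq_zero_of_mem_adjoin {R : Type*} [CommSemiring R] {f : R[X]}
    (hf : f ∈ Algebra.adjoin R {X ^ 2, X ^ 3}) : f.coeff 1 = 0 := by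
  induction hf using Algebra.adjoin_induction with
  | mem g hg =>
    rcases hg with rfl | rfl <;> simp [coeff_X_pow]
  | algebraMap _ => simp
  | add p q _ _ hp hq => simp [hp, hq]
  | mul p q _ _ hp hq =>
    simp [coeff_mul, Finset.Nat.sum_antidiagonal_eq_sum_range_succ_mk, Finset.sum_range_succ,
      hp, hq]

theorem Polynomial.mem_of_associated {K : Type*} [Field K] {S : Subalgebra K K[X]} {f g : K[X]}
    (hfg : Associated f g) (hf : f ∈ S) : g ∈ S := by
  obtain ⟨u, rfl⟩ := hfg
  obtain ⟨r, -, hr⟩ := Polynomial.isUnit_iff.mp u.isUnit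
  rw [← hr]
  exact S.mul_mem hf (S.algebraMap_mem r)

theorem isCoprime_one_add_self_one_add_self_add_sq {R : Type*} [CommRing R] (u : R) :
    IsCoprime (1 + u) (1 + u + u ^ 2) :=
  ⟨-u, 1, by ring⟩

theorem one_sub_pow_three_div_one_sub_sq {K : Type*} [Field K] {u : K} (hu : u ≠ 1) :
    (1 - u ^ 3) / (1 - u ^ 2) = (1 + u + u ^ 2) / (1 + u) := by
  rw [← mul_div_mul_left (1 + u + u ^ 2) (1 + u) (sub_ne_zero.mpr hu.symm)]
  ring_nf

theorem IsFractionRing.mul_eq_mul_of_algebraMap_mul_div_eq {R K : Type*} [CommRing R] [Field K]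
    [Algebra R K] [IsFractionRing R K] {a b d n : R} (hb : algebraMap R K b ≠ 0)
    (h : algebraMap R K d * (algebraMap R K a / algebraMap R K b) = algebraMap R K n) :
    d * a = n * b := by
  apply IsFractionRing.injective R K
  rw [← mul_div_assoc, div_eq_iff hb] at h
  simpa only [map_mul] using h

theorem dvd_mul_of_mul_eq_mul_of_add_eq_one {R : Type*} [CommRing R]
    {a₁ a₂ b₁ b₂ d n₁ n₂ y₁ y₂ x : R} (h₁ : d * a₁ = n₁ * b₁) (h₂ : d * a₂ = n₂ * b₂)
    (hbez : y₁ * n₁ + y₂ * n₂ + x * d = 1) : d ∣ b₁ * b₂ :=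
  ⟨y₁ * a₁ * b₂ + y₂ * a₂ * b₁ + x * b₁ * b₂, by
    linear_combination (b₁ * b₂) * hbez.symm - y₁ * b₂ * h₁ - y₂ * b₁ * h₂⟩

theorem mul_dvd_of_mul_eq_mul {R : Type*} [CommRing R] {a₁ a₂ b₁ b₂ d n₁ n₂ : R}
    (hab₁ : IsCoprime b₁ a₁) (hab₂ : IsCoprime b₂ a₂) (hb : IsCoprime b₁ b₂)
    (h₁ : d * a₁ = n₁ * b₁) (h₂ : d * a₂ = n₂ * b₂) : b₁ * b₂ ∣ d :=
  hb.mul_dvd (hab₁.dvd_of_dvd_mul_right ⟨n₁, by rw [h₁, mul_comm]⟩)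
    (hab₂.dvd_of_dvd_mul_right ⟨n₂, by rw [h₂, mul_comm]⟩)

theorem RatFunc.mul_eq_mul_of_algebraMap_mul_one_sub_pow_three_div {K : Type*} [Field K]
    {u d n : K[X]} (hu : u.coeff 0 = 0)
    (h : algebraMap K[X] (RatFunc K) d *
      ((1 - algebraMap K[X] (RatFunc K) u ^ 3) / (1 - algebraMap K[X] (RatFunc K) u ^ 2)) =
        algebraMap K[X] (RatFunc K) n) :
    d * (1 + u + u ^ 2) = n * (1 + u) := by
  have hι := IsFractionRing.injective K[X] (RatFunc K)
  have hu₁ : u ≠ 1 := fun hu1 => by simp [hu1] at hu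
  have hu₂ : 1 + u ≠ 0 := fun hu0 => by simpa [hu] using congrArg (coeff · 0) hu0
  rw [one_sub_pow_three_div_one_sub_sq (hι.ne_iff' (map_one _) |>.mpr hu₁)] at h
  refine IsFractionRing.mul_eq_mul_of_algebraMap_mul_div_eq ((map_ne_zero_iff _ hι).mpr hu₂) ?_
  simpa only [map_add, map_one, map_pow] using h

set_option synthInstance.maxHeartbeats 1000000 in
/-- over `A = ℝ[z²,z³]`, the plant
`P = [(1−z³)/(1−z²), (1−8z³)/(1−4z²)]ᵗ` has no right-coprime factorization. -/
theorem stmt_17 :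
    let S : Subalgebra ℝ (Polynomial ℝ) :=
      Algebra.adjoin ℝ {(X : Polynomial ℝ) ^ 2, (X : Polynomial ℝ) ^ 3}
    let ι := algebraMap (Polynomial ℝ) (RatFunc ℝ)
    let P : Matrix (Fin 2) (Fin 1) (RatFunc ℝ) :=
      !![(1 - RatFunc.X ^ 3) / (1 - RatFunc.X ^ 2);
         (1 - 8 * RatFunc.X ^ 3) / (1 - 4 * RatFunc.X ^ 2)]
    ¬ ∃ (N : Matrix (Fin 2) (Fin 1) (Polynomial ℝ)) (d : Polynomial ℝ)
        (Y : Matrix (Fin 1) (Fin 2) (Polynomial ℝ)) (x : Polynomial ℝ),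
        (∀ i j, N i j ∈ S) ∧ d ∈ S ∧ d ≠ 0 ∧ (∀ i j, Y i j ∈ S) ∧ x ∈ S ∧
        ι d • P = N.map ι ∧
        Y * N + (x * d) • (1 : Matrix (Fin 1) (Fin 1) (Polynomial ℝ)) = 1 := by
  intro S ι P
  rintro ⟨N, d, Y, x, -, hd, -, -, -, hfac, hbez⟩
  have h₁ : d * (1 + X + X ^ 2) = N 0 0 * (1 + X) :=
    RatFunc.mul_eq_mul_of_algebraMap_mul_one_sub_pow_three_div coeff_X_zero <| by
      simpa [P, RatFunc.algebraMap_X] using congrFun (congrFun hfac 0) 0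
  have h₂ : d * (1 + 2 * X + (2 * X) ^ 2) = N 1 0 * (1 + 2 * X) :=
    RatFunc.mul_eq_mul_of_algebraMap_mul_one_sub_pow_three_div (by simp) <| by
      have h := congrFun (congrFun hfac 1) 0
      norm_num [P, RatFunc.algebraMap_X, map_ofNat, mul_pow] at h ⊢
      exact h
  have hb : Y 0 0 * N 0 0 + Y 0 1 * N 1 0 + x * d = 1 := by
    simpa [Matrix.mul_apply, Fin.sum_univ_two] using congrFun (congrFun hbez 0) 0
  have hdg : Associated d ((1 + X) * (1 + 2 * X)) :=
    associated_of_dvd_dvd (dvd_mul_of_mul_eq_mul_of_add_eq_one h₁ h₂ hb)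
      (mul_dvd_of_mul_eq_mul (isCoprime_one_add_self_one_add_self_add_sq _)
        (isCoprime_one_add_self_one_add_self_add_sq _) ⟨2, -1, by ring⟩ h₁ h₂)
  have := coeff_one_eq_zero_of_mem_adjoin (mem_of_associated hdg hd)
  norm_num [mul_add, add_mul, coeff_X, coeff_one] at this
end

section
/- Let A = ℝ[z², z³] ⊂ ℝ[z], a Noetherian integral domain with field of fractions ℝ(z). Let λ₀₁ = (1+2z)(1−3z)(1+z+z²) and λ₀₂ = (1+z)(1+2z+4z²)(1−3z+z²), both elements of A. Then the ideal of A generated by λ₀₁ and λ₀₂ is the unit ideal; explicitly, α₁λ₀₁ + α₂λ₀₂ = 1 with α₁ = (−4233 − 23646z² − 39836z³ − 201780z⁴ − 113016z⁵ + 75344z⁶)/5852 and α₂ = (10085 + 18418z² + 121140z³ + 131852z⁴ + 113016z⁵)/5852, both in A. -/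
open Polynomial

set_option synthInstance.maxHeartbeats 1000000 in
/-- in `A = ℝ[z²,z³]`, the elements
`λ₀₁ = (1+2z)(1−3z)(1+z+z²)` and `λ₀₂ = (1+z)(1+2z+4z²)(1−3z+z²)` generate the
unit ideal, witnessed by the explicit coefficients `α₁`, `α₂`. -/
theorem stmt_18 :
    let S : Subalgebra ℝ (Polynomial ℝ) :=
      Algebra.adjoin ℝ {(X : Polynomial ℝ) ^ 2, (X : Polynomial ℝ) ^ 3}
    let lam1 : Polynomial ℝ := (1 + 2 * X) * (1 - 3 * X) * (1 + X + X ^ 2)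
    let lam2 : Polynomial ℝ := (1 + X) * (1 + 2 * X + 4 * X ^ 2) * (1 - 3 * X + X ^ 2)
    let a1 : Polynomial ℝ := C (1 / 5852 : ℝ) *
      (-4233 - 23646 * X ^ 2 - 39836 * X ^ 3 - 201780 * X ^ 4
        - 113016 * X ^ 5 + 75344 * X ^ 6)
    let a2 : Polynomial ℝ := C (1 / 5852 : ℝ) *
      (10085 + 18418 * X ^ 2 + 121140 * X ^ 3 + 131852 * X ^ 4 + 113016 * X ^ 5)
    lam1 ∈ S ∧ lam2 ∈ S ∧ a1 ∈ S ∧ a2 ∈ S ∧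
    a1 * lam1 + a2 * lam2 = 1 ∧
    Ideal.span {x : S | (x : Polynomial ℝ) = lam1 ∨ (x : Polynomial ℝ) = lam2} = ⊤ := by
  intro S lam1 lam2 a1 a2
  have h2 : (X : Polynomial ℝ) ^ 2 ∈ S := Algebra.subset_adjoin (Or.inl rfl)
  have h3 : (X : Polynomial ℝ) ^ 3 ∈ S := Algebra.subset_adjoin (Or.inr rfl)
  have h4 : (X : Polynomial ℝ) ^ 4 ∈ S := by
    have h : (X : Polynomial ℝ) ^ 4 = X ^ 2 * X ^ 2 := by ring
    rw [h]; exact S.mul_mem h2 h2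
  have h5 : (X : Polynomial ℝ) ^ 5 ∈ S := by
    have h : (X : Polynomial ℝ) ^ 5 = X ^ 2 * X ^ 3 := by ring
    rw [h]; exact S.mul_mem h2 h3
  have h6 : (X : Polynomial ℝ) ^ 6 ∈ S := by
    have h : (X : Polynomial ℝ) ^ 6 = X ^ 3 * X ^ 3 := by ring
    rw [h]; exact S.mul_mem h3 h3
  have key : ∀ c0 c2 c3 c4 c5 c6 : ℝ,
      C c0 + C c2 * X ^ 2 + C c3 * X ^ 3 + C c4 * X ^ 4 + C c5 * X ^ 5
        + C c6 * X ^ 6 ∈ S := fun c0 c2 c3 c4 c5 c6 =>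
    S.add_mem (S.add_mem (S.add_mem (S.add_mem (S.add_mem
      (S.algebraMap_mem c0) (S.mul_mem (S.algebraMap_mem c2) h2))
      (S.mul_mem (S.algebraMap_mem c3) h3))
      (S.mul_mem (S.algebraMap_mem c4) h4))
      (S.mul_mem (S.algebraMap_mem c5) h5))
      (S.mul_mem (S.algebraMap_mem c6) h6)
  have hl1 : lam1 ∈ S := by
    have h : lam1 = C (1:ℝ) + C (-6:ℝ) * X ^ 2 + C (-7:ℝ) * X ^ 3 + C (-6:ℝ) * X ^ 4
        + C (0:ℝ) * X ^ 5 + C (0:ℝ) * X ^ 6 := by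
      simp only [lam1, map_ofNat, map_neg, map_one, map_zero]
      ring
    rw [h]; exact key _ _ _ _ _ _
  have hl2 : lam2 ∈ S := by
    have h : lam2 = C (1:ℝ) + C (-2:ℝ) * X ^ 2 + C (-11:ℝ) * X ^ 3 + C (-6:ℝ) * X ^ 4
        + C (4:ℝ) * X ^ 5 + C (0:ℝ) * X ^ 6 := by
      simp only [lam2, map_ofNat, map_neg, map_one, map_zero]
      ring
    rw [h]; exact key _ _ _ _ _ _
  have hp1 : (-4233 - 23646 * X ^ 2 - 39836 * X ^ 3 - 201780 * X ^ 4
      - 113016 * X ^ 5 + 75344 * X ^ 6 : Polynomial ℝ) ∈ S := by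
    have h : (-4233 - 23646 * X ^ 2 - 39836 * X ^ 3 - 201780 * X ^ 4
        - 113016 * X ^ 5 + 75344 * X ^ 6 : Polynomial ℝ)
        = C (-4233:ℝ) + C (-23646:ℝ) * X ^ 2 + C (-39836:ℝ) * X ^ 3
          + C (-201780:ℝ) * X ^ 4 + C (-113016:ℝ) * X ^ 5 + C (75344:ℝ) * X ^ 6 := by
      simp only [map_ofNat, map_neg]
      ring
    rw [h]; exact key _ _ _ _ _ _
  have hp2 : (10085 + 18418 * X ^ 2 + 121140 * X ^ 3 + 131852 * X ^ 4
      + 113016 * X ^ 5 : Polynomial ℝ) ∈ S := by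
    have h : (10085 + 18418 * X ^ 2 + 121140 * X ^ 3 + 131852 * X ^ 4
        + 113016 * X ^ 5 : Polynomial ℝ)
        = C (10085:ℝ) + C (18418:ℝ) * X ^ 2 + C (121140:ℝ) * X ^ 3
          + C (131852:ℝ) * X ^ 4 + C (113016:ℝ) * X ^ 5 + C (0:ℝ) * X ^ 6 := by
      simp only [map_ofNat, map_zero]
      ring
    rw [h]; exact key _ _ _ _ _ _
  have ha1 : a1 ∈ S := S.mul_mem (S.algebraMap_mem _) hp1
  have ha2 : a2 ∈ S := S.mul_mem (S.algebraMap_mem _) hp2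
  have hint : (-4233 - 23646 * X ^ 2 - 39836 * X ^ 3 - 201780 * X ^ 4
        - 113016 * X ^ 5 + 75344 * X ^ 6 : Polynomial ℝ) * lam1
      + (10085 + 18418 * X ^ 2 + 121140 * X ^ 3 + 131852 * X ^ 4
        + 113016 * X ^ 5 : Polynomial ℝ) * lam2 = C (5852 : ℝ) := by
    simp only [lam1, lam2, map_ofNat]
    ring
  have hbez : a1 * lam1 + a2 * lam2 = 1 := by
    have h : a1 * lam1 + a2 * lam2 = C (1 / 5852 : ℝ)
        * ((-4233 - 23646 * X ^ 2 - 39836 * X ^ 3 - 201780 * X ^ 4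
            - 113016 * X ^ 5 + 75344 * X ^ 6) * lam1
          + (10085 + 18418 * X ^ 2 + 121140 * X ^ 3 + 131852 * X ^ 4
            + 113016 * X ^ 5) * lam2) := by
      simp only [a1, a2]
      ring
    rw [h, hint, ← C_mul]
    norm_num
  refine ⟨hl1, hl2, ha1, ha2, hbez, ?_⟩
  rw [Ideal.eq_top_iff_one]
  have m1 : (⟨lam1, hl1⟩ : S) ∈
      Ideal.span {x : S | (x : Polynomial ℝ) = lam1 ∨ (x : Polynomial ℝ) = lam2} :=
    Ideal.subset_span (Or.inl rfl)
  have m2 : (⟨lam2, hl2⟩ : S) ∈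
      Ideal.span {x : S | (x : Polynomial ℝ) = lam1 ∨ (x : Polynomial ℝ) = lam2} :=
    Ideal.subset_span (Or.inr rfl)
  have heq : (1 : S) = (⟨a1, ha1⟩ : S) * ⟨lam1, hl1⟩ + (⟨a2, ha2⟩ : S) * ⟨lam2, hl2⟩ := by
    refine Subtype.ext ?_
    push_cast
    exact hbez.symm
  rw [heq]
  exact Ideal.add_mem _ (Ideal.mul_mem_left _ _ m1) (Ideal.mul_mem_left _ _ m2)
end
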